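/- arXiv:1207.6939 — 5 statements merged into one kernel-verified Lean document; each statement's English description precedes it below -/
import Mathlib

section
/- Let $p$ be a prime, $D \subseteq \mathbb{F}_p^*$ a nonempty subset with $|D| = n$, and let $\Phi(D) = \max_{\chi \neq \chi_0} \left| \sum_{a \in D} \chi(a) \right|$, the maximum over nontrivial additive characters $\chi$ of $\mathbb{F}_p$. For $b \in \mathbb{F}_p$ and $k \ge 0$, let $N(k,b,D)$ be the number of $k$-element subsets $S \subseteq D$ with $\sum_{x \in S} x = b$. Then $\left| N(k,b,D) - p^{-1}\binom{n}{k} \right| \le \binom{\Phi(D) + k - 1}{k}$. -/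
open scoped Classical

/-- The additive character `χ_a(x) = e^{2πi a x / p}` of `𝔽_p`. -/
noncomputable def ep (p : ℕ) (a x : ZMod p) : ℂ :=
  Complex.exp (2 * Real.pi * Complex.I * ((a.val : ℂ) * (x.val : ℂ)) / p)

open Finset

noncomputable def zeta (p : ℕ) : ℂ := Complex.exp (2 * Real.pi * Complex.I / p)

noncomputable def ee (p : ℕ) (m : ZMod p) : ℂ := zeta p ^ m.val


noncomputable def Bb (Φ : ℝ) (k : ℕ) : ℝ := (∏ i ∈ Finset.range k, (Φ + i)) / (Nat.factorial k)

lemma Bb_nonneg {Φ : ℝ} (hΦ : 0 ≤ Φ) (k : ℕ) : 0 ≤ Bb Φ k := by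
  unfold Bb
  apply div_nonneg _ (by positivity)
  exact Finset.prod_nonneg fun i _ => by positivity

lemma Bb_sum (Φ : ℝ) : ∀ k : ℕ, ∑ i ∈ range (k+1), Bb Φ i = (∏ j ∈ range k, (Φ+1+j)) / (Nat.factorial k)
  | 0 => by simp [Bb]
  | (k+1) => by
    rw [Finset.sum_range_succ, Bb_sum Φ k]
    unfold Bb
    rw [Finset.prod_range_succ' (fun j => (Φ + (j:ℕ))) (k)]
    rw [Finset.prod_range_succ]
    have h1 : ∏ j ∈ range k, (Φ + ↑(j+1)) = ∏ j ∈ range k, (Φ+1+(j:ℕ)) :=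
      Finset.prod_congr rfl fun i _ => by push_cast; ring
    rw [h1, Nat.factorial_succ]
    have hk : ((Nat.factorial k : ℝ)) ≠ 0 := Nat.cast_ne_zero.mpr (Nat.factorial_ne_zero k)
    have hk1 : ((k:ℝ) + 1) ≠ 0 := by positivity
    push_cast
    field_simp
    ring

lemma Bb_key (Φ : ℝ) (k : ℕ) : Φ * ∑ i ∈ range (k+1), Bb Φ i = ((k:ℝ)+1) * Bb Φ (k+1) := by
  rw [Bb_sum]
  unfold Bb
  rw [Finset.prod_range_succ' (fun j => (Φ + (j:ℕ))) (k)]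
  have h1 : ∏ j ∈ range k, (Φ + ↑(j+1)) = ∏ j ∈ range k, (Φ+1+(j:ℕ)) :=
    Finset.prod_congr rfl fun i _ => by push_cast; ring
  rw [h1, Nat.factorial_succ]
  have hk : ((Nat.factorial k : ℝ)) ≠ 0 := Nat.cast_ne_zero.mpr (Nat.factorial_ne_zero k)
  have hk1 : ((k:ℝ) + 1) ≠ 0 := by positivity
  push_cast
  field_simp
  ring

lemma sum_antidiagonal_filter {M : Type*} [AddCommGroup M] (n : ℕ) (f : ℕ × ℕ → M) :
    ∑ a ∈ (Finset.HasAntidiagonal.antidiagonal n).filter (fun a => a.1 < n), f a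
      = ∑ i ∈ Finset.range n, f (i, n - i) := by
  have h2 := Finset.sum_filter_add_sum_filter_not (Finset.HasAntidiagonal.antidiagonal n) (fun a => a.1 < n) f
  have h3 : (Finset.HasAntidiagonal.antidiagonal n).filter (fun a => ¬ a.1 < n) = {(n,0)} := by
    ext ⟨x,y⟩
    simp only [Finset.mem_filter, Finset.HasAntidiagonal.mem_antidiagonal, Finset.mem_singleton, Prod.mk.injEq,
      not_lt]
    omega
  rw [h3, Finset.sum_singleton] at h2
  have h4 := Finset.Nat.sum_antidiagonal_eq_sum_range_succ_mk f n
  rw [Finset.sum_range_succ, Nat.sub_self] at h4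
  have := h2.trans h4
  exact add_right_cancel this

lemma aeval_esymm {σ : Type*} [Fintype σ] (w : σ → ℂ) (j : ℕ) :
    MvPolynomial.aeval w (MvPolynomial.esymm σ ℂ j)
      = ∑ t ∈ (Finset.univ : Finset σ).powersetCard j, ∏ i ∈ t, w i := by
  rw [MvPolynomial.aeval_esymm_eq_multiset_esymm, Finset.esymm_map_val]

lemma aeval_psum {σ : Type*} [Fintype σ] (w : σ → ℂ) (j : ℕ) :
    MvPolynomial.aeval w (MvPolynomial.psum σ ℂ j) = ∑ i : σ, w i ^ j := by
  simp [MvPolynomial.psum, map_sum, map_pow]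

lemma newton_concrete {σ : Type*} [Fintype σ] (w : σ → ℂ) (k : ℕ) :
    (k : ℂ) * (∑ t ∈ (Finset.univ : Finset σ).powersetCard k, ∏ i ∈ t, w i)
      = (-1)^(k+1) * ∑ a ∈ (Finset.HasAntidiagonal.antidiagonal k).filter (fun a => a.1 < k),
          (-1)^a.1 * (∑ t ∈ (Finset.univ : Finset σ).powersetCard a.1, ∏ i ∈ t, w i)
            * (∑ i : σ, w i ^ a.2) := by
  classical
  have h := congrArg (MvPolynomial.aeval w) (MvPolynomial.mul_esymm_eq_sum σ ℂ k)
  simpa [map_mul, map_sum, map_pow, map_natCast, aeval_esymm, aeval_psum] using h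

lemma esymm_norm_le {σ : Type*} [Fintype σ] (w : σ → ℂ) (Φ : ℝ) (hΦ : 0 ≤ Φ) (K : ℕ)
    (hP : ∀ j, 1 ≤ j → j ≤ K → ‖∑ i : σ, w i ^ j‖ ≤ Φ) :
    ∀ k, k ≤ K → ‖∑ t ∈ (Finset.univ : Finset σ).powersetCard k, ∏ i ∈ t, w i‖ ≤ Bb Φ k := by
  intro k
  induction k using Nat.strong_induction_on with
  | _ k ih =>
    intro hkK
    match k, ih, hkK with
    | 0, _, _ => simp [Bb]
    | (m+1), ih, hkK =>
      have hnewton := newton_concrete w (m+1)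
      set E : ℕ → ℂ := fun j => ∑ t ∈ (Finset.univ : Finset σ).powersetCard j, ∏ i ∈ t, w i
        with hE
      set P : ℕ → ℂ := fun j => ∑ i : σ, w i ^ j with hPdef
      have h1 : ((m:ℝ)+1) * ‖E (m+1)‖ = ‖((m+1 : ℕ) : ℂ) * E (m+1)‖ := by
        rw [norm_mul, Complex.norm_natCast]
        push_cast
        ring
      have h2 : ‖((m+1 : ℕ) : ℂ) * E (m+1)‖
          = ‖∑ a ∈ (Finset.HasAntidiagonal.antidiagonal (m+1)).filter (fun a => a.1 < m+1),
              (-1:ℂ)^a.1 * E a.1 * P a.2‖ := by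
        rw [hnewton, norm_mul, norm_pow, norm_neg, norm_one, one_pow, one_mul]
      have h3 : ‖∑ a ∈ (Finset.HasAntidiagonal.antidiagonal (m+1)).filter (fun a => a.1 < m+1),
              (-1:ℂ)^a.1 * E a.1 * P a.2‖
            ≤ ∑ i ∈ range (m+1), Bb Φ i * Φ := by
        rw [sum_antidiagonal_filter]
        refine le_trans (norm_sum_le _ _) (Finset.sum_le_sum fun i hi => ?_)
        rw [norm_mul, norm_mul, norm_pow, norm_neg, norm_one, one_pow, one_mul]
        have hi' : i < m + 1 := Finset.mem_range.mp hi
        refine mul_le_mul (ih i hi' (le_trans (le_of_lt hi') hkK))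
          (hP (m+1-i) (by omega) (by omega)) (norm_nonneg _) (Bb_nonneg hΦ i)
      have h4 : ∑ i ∈ range (m+1), Bb Φ i * Φ = ((m:ℝ)+1) * Bb Φ (m+1) := by
        rw [← Bb_key Φ m, Finset.mul_sum]
        exact Finset.sum_congr rfl fun i _ => by ring
      have hfin : ((m:ℝ)+1) * ‖E (m+1)‖ ≤ ((m:ℝ)+1) * Bb Φ (m+1) := by
        rw [h1, h2]; exact h3.trans_eq h4
      have hm : (0:ℝ) < (m:ℝ)+1 := by positivity
      exact le_of_mul_le_mul_left hfin hm

section Char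
variable {p : ℕ} [NeZero p]

lemma zeta_pow_p : zeta p ^ p = 1 :=
  (Complex.isPrimitiveRoot_exp p (NeZero.ne p)).pow_eq_one

lemma zeta_pow_mod (a : ℕ) : zeta p ^ (a % p) = zeta p ^ a := by
  conv_rhs => rw [← Nat.mod_add_div a p]
  rw [pow_add, pow_mul, zeta_pow_p, one_pow, mul_one]

lemma ee_natCast (a : ℕ) : ee p (a : ZMod p) = zeta p ^ a := by
  rw [ee, ZMod.val_natCast, zeta_pow_mod]

lemma ee_zero : ee p 0 = 1 := by simp [ee, ZMod.val_zero]

lemma ee_add (x y : ZMod p) : ee p (x + y) = ee p x * ee p y := by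
  have h : x + y = ((x.val + y.val : ℕ) : ZMod p) := by
    push_cast
    rw [ZMod.natCast_val, ZMod.natCast_val, ZMod.cast_id, ZMod.cast_id]
  rw [h, ee_natCast, pow_add, ee, ee]

lemma ee_sum {α : Type*} (s : Finset α) (f : α → ZMod p) :
    ee p (∑ x ∈ s, f x) = ∏ x ∈ s, ee p (f x) := by
  classical
  induction s using Finset.induction_on with
  | empty => simp [ee_zero]
  | insert _ _ h ih => rw [Finset.sum_insert h, Finset.prod_insert h, ee_add, ih]

lemma ee_pow (j : ℕ) (m : ZMod p) : ee p m ^ j = ee p ((j : ZMod p) * m) := by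
  have h : (j : ZMod p) * m = ((m.val * j : ℕ) : ZMod p) := by
    push_cast
    rw [ZMod.natCast_val, ZMod.cast_id]
    ring
  rw [h, ee_natCast, ee, ← pow_mul]

lemma ee_norm (m : ZMod p) : ‖ee p m‖ = 1 := by
  have h : (2 * Real.pi * Complex.I / p) = ((2 * Real.pi / p : ℝ) : ℂ) * Complex.I := by
    push_cast; ring
  have hz : ‖zeta p‖ = 1 := by
    rw [zeta, h]
    exact Complex.norm_exp_ofReal_mul_I _
  rw [ee, norm_pow, hz, one_pow]

lemma ep_eq (c x : ZMod p) : ep p c x = ee p (c * x) := by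
  have h : 2 * Real.pi * Complex.I * ((c.val : ℂ) * (x.val : ℂ)) / p
      = ((c.val * x.val : ℕ) : ℂ) * (2 * Real.pi * Complex.I / p) := by
    push_cast; ring
  have h2 : c * x = ((c.val * x.val : ℕ) : ZMod p) := by
    push_cast
    rw [ZMod.natCast_val, ZMod.natCast_val, ZMod.cast_id, ZMod.cast_id]
  rw [ep, h, Complex.exp_nat_mul, h2, ee_natCast, zeta]

end Char

lemma ee_orth {p : ℕ} [NeZero p] (hp : p.Prime) (x : ZMod p) :
    ∑ c : ZMod p, ee p (c * x) = if x = 0 then (p : ℂ) else 0 := by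
  haveI : Fact p.Prime := ⟨hp⟩
  by_cases hx : x = 0
  · simp [hx, ee_zero, Finset.card_univ, ZMod.card]
  · rw [if_neg hx]
    have h1 : ∑ c : ZMod p, ee p (c * x) = ∑ c : ZMod p, ee p c :=
      Fintype.sum_equiv (Equiv.mulRight₀ x hx) _ _ (fun c => rfl)
    have h2 : ∑ c : ZMod p, ee p c = ∑ i ∈ range p, zeta p ^ i := by
      apply Finset.sum_nbij' (i := fun (c : ZMod p) => c.val) (j := fun i => (i : ZMod p))
      · intro c _; exact Finset.mem_range.mpr (ZMod.val_lt c)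
      · intro i _; exact Finset.mem_univ _
      · intro c _; simp [ZMod.natCast_val, ZMod.cast_id]
      · intro i hi; exact ZMod.val_natCast_of_lt (Finset.mem_range.mp hi)
      · intro c _; rfl
    have hne1 : zeta p ≠ 1 :=
      (Complex.isPrimitiveRoot_exp p hp.ne_zero).ne_one hp.one_lt
    rw [h1, h2, geom_sum_eq hne1, zeta_pow_p (p := p), sub_self, zero_div]


/-- Lemma 3.1: for a nonempty `D ⊆ 𝔽_p^*` with `|D| = n` and
`Φ(D) = max_{χ ≠ χ₀} |∑_{a ∈ D} χ(a)|` (the maximum over nontrivial additive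
characters `χ_c`, `c ≠ 0`), the number `N(k,b,D)` of `k`-subsets of `D`
summing to `b` satisfies `|N(k,b,D) - p⁻¹ C(n,k)| ≤ C(Φ(D)+k-1, k)`. -/
theorem subset_sum_count_bound (p : ℕ) (hp : p.Prime) (D : Finset (ZMod p))
    (hD : D.Nonempty) (h0 : (0 : ZMod p) ∉ D) (n : ℕ) (hn : D.card = n)
    (b : ZMod p) (k : ℕ) (Φ : ℝ)
    (hΦ : Φ = sSup {r : ℝ | ∃ c : ZMod p, c ≠ 0 ∧ r = ‖∑ a ∈ D, ep p c a‖}) :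
    |(((D.powersetCard k).filter (fun S => ∑ x ∈ S, x = b)).card : ℝ) -
        (p : ℝ)⁻¹ * (n.choose k : ℝ)| ≤
      (∏ i ∈ Finset.range k, (Φ + k - 1 - i)) / (Nat.factorial k : ℝ) := by
  haveI : Fact p.Prime := ⟨hp⟩
  haveI : NeZero p := ⟨hp.ne_zero⟩
  -- Properties of Φ
  have hfin : Set.Finite {r : ℝ | ∃ c : ZMod p, c ≠ 0 ∧ r = ‖∑ a ∈ D, ep p c a‖} := by
    apply Set.Finite.subset (Set.finite_range (fun c : ZMod p => ‖∑ a ∈ D, ep p c a‖))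
    rintro r ⟨c, _, rfl⟩; exact ⟨c, rfl⟩
  have hbdd : BddAbove {r : ℝ | ∃ c : ZMod p, c ≠ 0 ∧ r = ‖∑ a ∈ D, ep p c a‖} :=
    hfin.bddAbove
  have hmem : ∀ c : ZMod p, c ≠ 0 → ‖∑ a ∈ D, ep p c a‖ ≤ Φ := fun c hc =>
    hΦ ▸ le_csSup hbdd ⟨c, hc, rfl⟩
  have hΦ0 : (0:ℝ) ≤ Φ := le_trans (norm_nonneg _) (hmem 1 one_ne_zero)
  -- rewrite the RHS
  have hRHS : (∏ i ∈ Finset.range k, (Φ + k - 1 - i)) / (Nat.factorial k : ℝ) = Bb Φ k := by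
    unfold Bb; congr 1
    rw [← Finset.prod_range_reflect (fun j => Φ + (j:ℝ)) k]
    refine Finset.prod_congr rfl fun i hi => ?_
    have hik : i < k := Finset.mem_range.mp hi
    rw [Nat.sub_sub, Nat.cast_sub (by omega : 1 + i ≤ k)]
    push_cast; ring
  rw [hRHS]
  have hBnn : 0 ≤ Bb Φ k := Bb_nonneg hΦ0 k
  by_cases hkn : n < k
  · have hemp : D.powersetCard k = ∅ :=
      Finset.powersetCard_eq_empty.mpr (by rw [hn]; exact hkn)
    rw [hemp, Nat.choose_eq_zero_of_lt hkn]
    simpa using hBnn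
  push_neg at hkn
  have hnp : n < p := by
    have hDne : D ≠ Finset.univ := fun h => h0 (h ▸ Finset.mem_univ 0)
    have h1 := Finset.card_lt_card (Finset.ssubset_univ_iff.mpr hDne)
    rwa [Finset.card_univ, ZMod.card, hn] at h1
  set P := D.powersetCard k with hPdef
  set N : ℕ := (P.filter (fun S => ∑ x ∈ S, x = b)).card with hNdef
  set F : ZMod p → ℂ := fun c => ∑ S ∈ P, ee p (c * ∑ x ∈ S, x) with hFdef
  -- bound on ‖F c‖ for c ≠ 0
  have hFbound : ∀ c : ZMod p, c ≠ 0 → ‖F c‖ ≤ Bb Φ k := by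
    intro c hc
    have htrans : F c = ∑ t ∈ (Finset.univ : Finset ↥D).powersetCard k,
        ∏ i ∈ t, ee p (c * (i : ZMod p)) := by
      rw [hFdef]
      simp only
      conv_lhs => rw [hPdef, ← Finset.attach_map_val (s := D), Finset.powersetCard_map,
        Finset.sum_map]
      rw [Finset.univ_eq_attach]
      refine Finset.sum_congr rfl fun t _ => ?_
      have hemb : (Finset.mapEmbedding (Function.Embedding.subtype fun x => x ∈ D)).toEmbedding t
          = t.map (Function.Embedding.subtype fun x => x ∈ D) := rfl
      rw [hemb, Finset.sum_map, Finset.mul_sum, ee_sum]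
      rfl
    rw [htrans]
    refine esymm_norm_le _ Φ hΦ0 k ?_ k le_rfl
    intro j hj1 hjk
    have hsum : ∑ i : ↥D, (ee p (c * (i : ZMod p)))^j = ∑ x ∈ D, ep p ((j : ZMod p) * c) x := by
      rw [Finset.univ_eq_attach, Finset.sum_attach D (fun x => (ee p (c * x))^j)]
      refine Finset.sum_congr rfl fun x _ => ?_
      rw [ee_pow, ep_eq, mul_assoc]
    rw [hsum]
    apply hmem
    apply mul_ne_zero _ hc
    intro hj0
    have hdvd := (ZMod.natCast_eq_zero_iff j p).mp hj0
    have := Nat.le_of_dvd (by omega) hdvd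
    omega
  -- the key identity
  have key : (N : ℂ) * p - (n.choose k : ℂ)
      = ∑ c ∈ Finset.univ.erase (0 : ZMod p), F c * ee p (c * (-b)) := by
    have h1 : (N:ℂ) * p = ∑ S ∈ P, (if (∑ x ∈ S, x) = b then (p:ℂ) else 0) := by
      rw [Finset.sum_ite, Finset.sum_const, Finset.sum_const_zero, add_zero, nsmul_eq_mul, hNdef]
    have h2 : ∀ S : Finset (ZMod p), (if (∑ x ∈ S, x) = b then (p:ℂ) else 0)
        = ∑ c : ZMod p, ee p (c * (∑ x ∈ S, x)) * ee p (c * (-b)) := by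
      intro S
      have horth := ee_orth hp ((∑ x ∈ S, x) - b)
      have hcong : ∀ c : ZMod p, ee p (c * ((∑ x ∈ S, x) - b))
          = ee p (c * (∑ x ∈ S, x)) * ee p (c * (-b)) := by
        intro c
        rw [← ee_add]
        congr 1
        ring
      rw [← Finset.sum_congr rfl (fun c _ => hcong c), horth]
      by_cases hSb : (∑ x ∈ S, x) = b
      · rw [if_pos hSb, if_pos (by rw [hSb, sub_self])]
      · rw [if_neg hSb, if_neg (fun h => hSb (sub_eq_zero.mp h))]
    have h3 : (N:ℂ) * p = ∑ c : ZMod p, F c * ee p (c * (-b)) := by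
      rw [h1]
      rw [Finset.sum_congr rfl (fun S _ => h2 S), Finset.sum_comm]
      refine Finset.sum_congr rfl fun c _ => ?_
      rw [hFdef]
      simp only
      rw [Finset.sum_mul]
    have h4 : F 0 * ee p ((0 : ZMod p) * (-b)) = (n.choose k : ℂ) := by
      rw [hFdef]
      simp only [zero_mul, ee_zero, mul_one]
      rw [Finset.sum_const, hPdef, Finset.card_powersetCard, hn]
      simp
    rw [h3, ← Finset.sum_erase_add Finset.univ _ (Finset.mem_univ (0 : ZMod p)), h4]
    ring
  -- final estimate
  have hp0 : (0:ℝ) < p := by exact_mod_cast hp.pos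
  have hnormsum : ‖(N:ℂ) * p - (n.choose k : ℂ)‖ ≤ (p:ℝ) * Bb Φ k := by
    rw [key]
    refine le_trans (norm_sum_le _ _) ?_
    have hle : ∀ c ∈ Finset.univ.erase (0 : ZMod p), ‖F c * ee p (c * (-b))‖ ≤ Bb Φ k := by
      intro c hc
      rw [norm_mul, ee_norm, mul_one]
      exact hFbound c (Finset.mem_erase.mp hc).1
    refine le_trans (Finset.sum_le_sum hle) ?_
    rw [Finset.sum_const, nsmul_eq_mul]
    refine mul_le_mul_of_nonneg_right ?_ hBnn
    have hcard : (Finset.univ.erase (0 : ZMod p)).card ≤ p := by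
      calc (Finset.univ.erase (0 : ZMod p)).card
          ≤ (Finset.univ : Finset (ZMod p)).card :=
            Finset.card_le_card (Finset.erase_subset _ _)
        _ = p := by rw [Finset.card_univ, ZMod.card]
    exact_mod_cast hcard
  have habs : |(N:ℝ) - (p:ℝ)⁻¹ * (n.choose k)| = (p:ℝ)⁻¹ * ‖(N:ℂ) * p - (n.choose k : ℂ)‖ := by
    have h5 : (N:ℝ) - (p:ℝ)⁻¹ * (n.choose k) = (p:ℝ)⁻¹ * ((N:ℝ) * p - (n.choose k)) := by
      field_simp
    rw [h5, abs_mul, abs_of_pos (inv_pos.mpr hp0)]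
    congr 1
    rw [show ((N:ℂ) * p - (n.choose k : ℂ)) = (((N:ℝ) * p - (n.choose k : ℝ) : ℝ) : ℂ) by
      push_cast; ring]
    rw [Complex.norm_real, Real.norm_eq_abs]
  rw [habs]
  calc (p:ℝ)⁻¹ * ‖(N:ℂ) * p - (n.choose k : ℂ)‖
      ≤ (p:ℝ)⁻¹ * ((p:ℝ) * Bb Φ k) :=
        mul_le_mul_of_nonneg_left hnormsum (le_of_lt (inv_pos.mpr hp0))
    _ = Bb Φ k := by
        rw [← mul_assoc, inv_mul_cancel₀ (ne_of_gt hp0), one_mul]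
end

section
/- Let $D$ be a finite set, $X \subseteq D^k$ a symmetric subset (closed under permutation of coordinates by $S_k$), and $f : X \to \mathbb{C}$ a symmetric function. With $\overline{X}$, $F$, $F_\tau$, and $\mathrm{sign}(\tau)$ as in the distinct-coordinate sieve, we have $F = \sum_{\bar\tau \in C_k} \mathrm{sign}(\tau)\, C(\tau)\, F_\tau$, where $C_k$ is the set of conjugacy classes of $S_k$, $\tau$ is a representative of the class $\bar\tau$, and $C(\tau)$ is the number of permutations conjugate to $\tau$. -/
open scoped Classical

-- condition reformulation
lemma aux_cond_iff {D : Type*} {k : ℕ} (x : Fin k → D) (τ : Equiv.Perm (Fin k)) :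
    (∀ i j : Fin k, τ.SameCycle i j → x i = x j) ↔ ∀ i, x (τ i) = x i := by
  constructor
  · intro h i
    exact (h i (τ i) ⟨1, by simp⟩).symm
  · intro h i j hij
    obtain ⟨n, hn, rfl⟩ := hij.exists_pow_eq'
    clear hn
    have : ∀ m : ℕ, x ((τ ^ m) i) = x i := by
      intro m
      induction m with
      | zero => simp
      | succ m ih => rw [pow_succ', Equiv.Perm.mul_apply, h ((τ ^ m) i)]; exact ih
    exact (this n).symm

-- the key sign sum
lemma aux_sign_sum {D : Type*} {k : ℕ} (x : Fin k → D) :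
    ∑ τ : Equiv.Perm (Fin k),
      (if ∀ i, x (τ i) = x i then ((Equiv.Perm.sign τ : ℤ) : ℂ) else 0) =
      if ∀ i j : Fin k, i ≠ j → x i ≠ x j then 1 else 0 := by
  rw [← Finset.sum_filter]
  by_cases hinj : ∀ i j : Fin k, i ≠ j → x i ≠ x j
  · rw [if_pos hinj]
    have : Finset.univ.filter (fun τ : Equiv.Perm (Fin k) => ∀ i, x (τ i) = x i) = {1} := by
      ext τ
      simp only [Finset.mem_filter, Finset.mem_univ, true_and, Finset.mem_singleton]
      constructor
      · intro h
        refine Equiv.ext fun i => ?_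
        by_contra hne
        exact hinj (τ i) i hne (h i)
      · rintro rfl; simp
    simp [this]
  · rw [if_neg hinj]
    push_neg at hinj
    obtain ⟨i, j, hij, hxij⟩ := hinj
    refine Finset.sum_involution (fun τ _ => Equiv.swap i j * τ) ?_ ?_ ?_ ?_
    · intro τ hτ
      rw [map_mul, Equiv.Perm.sign_swap hij]
      push_cast
      ring
    · intro τ _ h
      intro heq
      have hs : Equiv.swap i j = 1 := by
        have := congrArg (· * τ⁻¹) heq
        simpa using this
      exact hij (Equiv.swap_eq_one_iff.mp hs)
    · intro τ hτ
      simp only [Finset.mem_filter, Finset.mem_univ, true_and] at hτ ⊢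
      intro l
      rw [Equiv.Perm.mul_apply]
      rcases eq_or_ne (τ l) i with h1 | h1
      · rw [h1, Equiv.swap_apply_left, ← hxij, ← h1]; exact hτ l
      rcases eq_or_ne (τ l) j with h2 | h2
      · rw [h2, Equiv.swap_apply_right, hxij, ← h2]; exact hτ l
      · rw [Equiv.swap_apply_of_ne_of_ne h1 h2]; exact hτ l
    · intro τ _
      simp [← mul_assoc]

lemma aux_F_conj {D : Type*} [Fintype D] {k : ℕ} (X : Finset (Fin k → D))
    (f : (Fin k → D) → ℂ)
    (hX : ∀ (σ : Equiv.Perm (Fin k)) (x : Fin k → D), x ∈ X → (x ∘ σ) ∈ X)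
    (hf : ∀ (σ : Equiv.Perm (Fin k)) (x : Fin k → D), x ∈ X → f (x ∘ σ) = f x)
    (σ τ : Equiv.Perm (Fin k)) :
    ∑ x ∈ X.filter (fun x => ∀ i j : Fin k, (σ * τ * σ⁻¹).SameCycle i j → x i = x j), f x =
      ∑ x ∈ X.filter (fun x => ∀ i j : Fin k, τ.SameCycle i j → x i = x j), f x := by
  refine Finset.sum_nbij' (fun x => x ∘ ⇑σ) (fun x => x ∘ ⇑σ⁻¹) ?_ ?_ ?_ ?_ ?_
  · intro x hx
    simp only [Finset.mem_filter] at hx ⊢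
    refine ⟨hX σ x hx.1, fun i j hij => ?_⟩
    exact hx.2 (σ i) (σ j) (hij.conj)
  · intro x hx
    simp only [Finset.mem_filter] at hx ⊢
    refine ⟨hX σ⁻¹ x hx.1, fun i j hij => ?_⟩
    have := Equiv.Perm.sameCycle_conj.mp hij
    simp only [Function.comp_apply]
    exact hx.2 (σ⁻¹ i) (σ⁻¹ j) this
  · intro x _; ext i; simp
  · intro x _; ext i; simp
  · intro x hx
    simp only [Finset.mem_filter] at hx
    exact (hf σ x hx.1).symm


/-- The symmetric form of the distinct coordinate sieve: if `X ⊆ D^k` is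
symmetric and `f` is a symmetric function on `X`, then
`F = ∑_{τ̄ ∈ C_k} sign(τ) C(τ) F_τ`, summing over conjugacy classes of `S_k`,
with `C(τ)` the number of permutations conjugate to `τ`. -/
theorem distinct_coordinate_sieve_symmetric {D : Type*} [Fintype D] (k : ℕ)
    (X : Finset (Fin k → D)) (f : (Fin k → D) → ℂ)
    (hX : ∀ (σ : Equiv.Perm (Fin k)) (x : Fin k → D), x ∈ X → (x ∘ σ) ∈ X)
    (hf : ∀ (σ : Equiv.Perm (Fin k)) (x : Fin k → D), x ∈ X → f (x ∘ σ) = f x) :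
    ∑ x ∈ X.filter (fun x => ∀ i j : Fin k, i ≠ j → x i ≠ x j), f x =
      ∑ cl : ConjClasses (Equiv.Perm (Fin k)),
        ((Equiv.Perm.sign (Quotient.out cl) : ℤ) : ℂ) *
          ((Finset.univ.filter
              (fun σ : Equiv.Perm (Fin k) => IsConj (Quotient.out cl) σ)).card : ℂ) *
          ∑ x ∈ X.filter
              (fun x => ∀ i j : Fin k, (Quotient.out cl).SameCycle i j → x i = x j),
            f x := by
  have step1 : ∑ x ∈ X.filter (fun x => ∀ i j : Fin k, i ≠ j → x i ≠ x j), f x =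
      ∑ τ : Equiv.Perm (Fin k), ((Equiv.Perm.sign τ : ℤ) : ℂ) *
        ∑ x ∈ X.filter (fun x => ∀ i j : Fin k, τ.SameCycle i j → x i = x j), f x := by
    rw [Finset.sum_filter]
    have key : ∀ x ∈ X, (if (∀ i j : Fin k, i ≠ j → x i ≠ x j) then f x else 0) =
        ∑ τ : Equiv.Perm (Fin k),
          (if ∀ i j : Fin k, τ.SameCycle i j → x i = x j
            then ((Equiv.Perm.sign τ : ℤ) : ℂ) * f x else 0) := by
      intro x _
      have := aux_sign_sum (k := k) x
      calc (if (∀ i j : Fin k, i ≠ j → x i ≠ x j) then f x else 0)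
          = (if (∀ i j : Fin k, i ≠ j → x i ≠ x j) then (1:ℂ) else 0) * f x := by
            split <;> simp
        _ = (∑ τ : Equiv.Perm (Fin k),
              (if ∀ i, x (τ i) = x i then ((Equiv.Perm.sign τ : ℤ) : ℂ) else 0)) * f x := by
            rw [this]
        _ = _ := by
            rw [Finset.sum_mul]
            refine Finset.sum_congr rfl fun τ _ => ?_
            rw [ite_mul, zero_mul]
            congr 1
            simp only [eq_iff_iff]
            exact (aux_cond_iff x τ).symm
    rw [Finset.sum_congr rfl key, Finset.sum_comm]
    refine Finset.sum_congr rfl fun τ _ => ?_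
    rw [← Finset.sum_filter, ← Finset.mul_sum]
  rw [step1, ← Finset.sum_fiberwise Finset.univ (ConjClasses.mk)
    (fun τ : Equiv.Perm (Fin k) => ((Equiv.Perm.sign τ : ℤ) : ℂ) *
      ∑ x ∈ X.filter (fun x => ∀ i j : Fin k, τ.SameCycle i j → x i = x j), f x)]
  refine Finset.sum_congr rfl fun cl _ => ?_
  have hout : ConjClasses.mk (Quotient.out cl) = cl := by
    rw [← ConjClasses.quotient_mk_eq_mk]; exact Quotient.out_eq cl
  have hfilter : Finset.univ.filter (fun τ : Equiv.Perm (Fin k) => ConjClasses.mk τ = cl) =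
      Finset.univ.filter (fun σ : Equiv.Perm (Fin k) => IsConj (Quotient.out cl) σ) := by
    ext τ
    simp only [Finset.mem_filter, Finset.mem_univ, true_and]
    constructor
    · intro h
      exact isConj_comm.mp (ConjClasses.mk_eq_mk_iff_isConj.mp (h.trans hout.symm))
    · intro h
      exact (ConjClasses.mk_eq_mk_iff_isConj.mpr (isConj_comm.mp h)).trans hout
  rw [hfilter]
  have hterm : ∀ τ ∈ Finset.univ.filter
      (fun σ : Equiv.Perm (Fin k) => IsConj (Quotient.out cl) σ),
      ((Equiv.Perm.sign τ : ℤ) : ℂ) *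
        ∑ x ∈ X.filter (fun x => ∀ i j : Fin k, τ.SameCycle i j → x i = x j), f x =
      ((Equiv.Perm.sign (Quotient.out cl) : ℤ) : ℂ) *
        ∑ x ∈ X.filter
          (fun x => ∀ i j : Fin k, (Quotient.out cl).SameCycle i j → x i = x j), f x := by
    intro τ hτ
    rw [Finset.mem_filter] at hτ
    obtain ⟨σ, hσ⟩ := isConj_iff.mp hτ.2
    subst hσ
    have hsign : Equiv.Perm.sign (σ * Quotient.out cl * σ⁻¹) =
        Equiv.Perm.sign (Quotient.out cl) := by
      simp only [map_mul, map_inv, Equiv.Perm.sign_inv]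
      rw [mul_comm, ← mul_assoc, inv_mul_cancel, one_mul]
    rw [hsign, aux_F_conj X f hX hf σ (Quotient.out cl)]
  rw [Finset.sum_congr rfl hterm, Finset.sum_const, nsmul_eq_mul]
  ring
end

section
/- Let $p$ be a prime, $D \subseteq \mathbb{F}_p$ a nonempty subset with $|D| = n$, $k \ge 1$, $b \in \mathbb{F}_p$, and let $N_{\mathrm{ord}}(k,b,D)$ denote the number of ordered tuples $(x_1,\dots,x_k) \in D^k$ with pairwise distinct coordinates and $x_1 + \cdots + x_k = b$. Then $N_{\mathrm{ord}}(k,b,D) = p^{-1}(n)_k + p^{-1} \sum_{\chi \neq \chi_0} \chi^{-1}(b) \sum_{\tau \in S_k} \mathrm{sign}(\tau) \prod_{i=1}^{k} \left( \sum_{a \in D} \chi(a)^i \right)^{c_i(\tau)}$, where the outer sum is over nontrivial additive characters $\chi$ of $\mathbb{F}_p$, $c_i(\tau)$ is the number of $i$-cycles of $\tau$, and $(n)_k = n(n-1)\cdots(n-k+1)$. -/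
open scoped Classical

section chars
variable (p : ℕ) [Fact p.Prime]

noncomputable def eroot (p : ℕ) : ℂ := Complex.exp (2 * Real.pi * Complex.I / p)

lemma hp0 : (p : ℂ) ≠ 0 := by
  exact_mod_cast (Fact.out : p.Prime).ne_zero

lemma ep_eq_s8 (a x : ZMod p) : ep p a x = eroot p ^ (a.val * x.val) := by
  rw [ep, eroot, ← Complex.exp_nat_mul]
  push_cast
  ring_nf

lemma eroot_pow_p : eroot p ^ p = 1 := by
  rw [eroot, ← Complex.exp_nat_mul]
  rw [show (p:ℂ) * (2 * Real.pi * Complex.I / p) = 2 * Real.pi * Complex.I by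
    rw [mul_div_assoc']; exact mul_div_cancel_left₀ _ (hp0 p)]
  exact Complex.exp_two_pi_mul_I

lemma eroot_pow_mod (m : ℕ) : eroot p ^ (m % p) = eroot p ^ m := by
  conv_rhs => rw [← Nat.div_add_mod m p]
  rw [pow_add, pow_mul, eroot_pow_p, one_pow, one_mul]

lemma ep_add (a x y : ZMod p) : ep p a (x + y) = ep p a x * ep p a y := by
  haveI : NeZero p := ⟨(Fact.out : p.Prime).ne_zero⟩
  rw [ep_eq_s8, ep_eq_s8, ep_eq_s8, ← pow_add, ZMod.val_add, mul_comm (a.val),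
    pow_mul, eroot_pow_mod, ← pow_mul, mul_comm, Nat.mul_add]

lemma ep_zero (a : ZMod p) : ep p a 0 = 1 := by
  haveI : NeZero p := ⟨(Fact.out : p.Prime).ne_zero⟩
  rw [ep_eq_s8, ZMod.val_zero, mul_zero, pow_zero]

lemma ep_zero_left (x : ZMod p) : ep p 0 x = 1 := by
  haveI : NeZero p := ⟨(Fact.out : p.Prime).ne_zero⟩
  rw [ep_eq_s8, ZMod.val_zero, zero_mul, pow_zero]

lemma ep_ne_zero (a x : ZMod p) : ep p a x ≠ 0 := Complex.exp_ne_zero _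

lemma ep_sum {ι : Type*} (a : ZMod p) (s : Finset ι) (g : ι → ZMod p) :
    ep p a (∑ i ∈ s, g i) = ∏ i ∈ s, ep p a (g i) := by
  induction s using Finset.cons_induction with
  | empty => simpa using ep_zero p a
  | cons i s hi ih => rw [Finset.sum_cons, Finset.prod_cons, ep_add, ih]

lemma ep_orth (c : ZMod p) :
    ∑ a : ZMod p, ep p a c = if c = 0 then (p : ℂ) else 0 := by
  haveI : NeZero p := ⟨(Fact.out : p.Prime).ne_zero⟩
  have key : ∑ a : ZMod p, ep p a c = ∑ j ∈ Finset.range p, (eroot p ^ c.val) ^ j := by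
    refine Finset.sum_nbij' (fun a => a.val) (fun j => (j : ZMod p)) ?_ ?_ ?_ ?_ ?_
    · intro a _; exact Finset.mem_range.2 (ZMod.val_lt a)
    · intro j _; exact Finset.mem_univ _
    · intro a _; exact ZMod.natCast_rightInverse a
    · intro j hj; exact ZMod.val_natCast_of_lt (Finset.mem_range.1 hj)
    · intro a _; rw [ep_eq_s8, ← pow_mul, mul_comm]
  rw [key]
  by_cases hc : c = 0
  · simp [hc, ZMod.val_zero]
  · rw [if_neg hc]
    have hprim : IsPrimitiveRoot (eroot p) p :=
      Complex.isPrimitiveRoot_exp p (Fact.out : p.Prime).ne_zero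
    have hne1 : eroot p ^ c.val ≠ 1 := by
      intro h
      have := (hprim.pow_eq_one_iff_dvd c.val).1 h
      have hlt := ZMod.val_lt c
      have h0 := Nat.eq_zero_of_dvd_of_lt this (ZMod.val_lt c)
      exact hc ((ZMod.val_eq_zero c).1 h0)
    have hgeom := geom_sum_eq hne1 p
    rw [hgeom, ← pow_mul, mul_comm c.val p, pow_mul, eroot_pow_p, one_pow, sub_self,
      zero_div]
end chars


section comb
variable {k : ℕ} {β : Type*} [Fintype β]

lemma sign_fiber_sum (x : Fin k → β) :
    ∑ τ ∈ Finset.univ.filter (fun τ : Equiv.Perm (Fin k) => ∀ i, x (τ i) = x i),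
      ((Equiv.Perm.sign τ : ℤ) : ℂ) = if Function.Injective x then 1 else 0 := by
  by_cases hinj : Function.Injective x
  · rw [if_pos hinj]
    have h1 : Finset.univ.filter (fun τ : Equiv.Perm (Fin k) => ∀ i, x (τ i) = x i)
        = {1} := by
      ext τ
      simp only [Finset.mem_filter, Finset.mem_univ, true_and, Finset.mem_singleton]
      constructor
      · intro h
        exact Equiv.ext fun i => hinj (h i)
      · rintro rfl i; rfl
    rw [h1]
    simp
  · rw [if_neg hinj]
    obtain ⟨i, j, hxij, hij⟩ := Function.not_injective_iff.1 hinj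
    have hswap : ∀ a, x (Equiv.swap i j a) = x a := by
      intro a
      rcases eq_or_ne a i with rfl | hai
      · rw [Equiv.swap_apply_left]; exact hxij.symm
      rcases eq_or_ne a j with rfl | haj
      · rw [Equiv.swap_apply_right]; exact hxij
      · rw [Equiv.swap_apply_of_ne_of_ne hai haj]
    refine Finset.sum_involution (fun τ _ => Equiv.swap i j * τ) ?_ ?_ ?_ ?_
    · intro τ _
      rw [Equiv.Perm.sign_mul, Equiv.Perm.sign_swap hij]
      push_cast
      ring
    · intro τ _ _ h
      have h1 : Equiv.swap i j = 1 := mul_right_cancel (h.trans (one_mul τ).symm)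
      exact hij (Equiv.swap_eq_one_iff.1 h1)
    · intro τ hτ
      simp only [Finset.mem_filter, Finset.mem_univ, true_and] at hτ ⊢
      intro m
      rw [Equiv.Perm.mul_apply, hswap, hτ]
    · intro τ _
      show Equiv.swap i j * (Equiv.swap i j * τ) = τ
      rw [← mul_assoc, Equiv.swap_mul_self, one_mul]

end comb

section orbit
variable {k : ℕ} {β : Type*} [Fintype β] (τ : Equiv.Perm (Fin k))

lemma iter_fixed (x : Fin k → β) (hx : ∀ i, x (τ i) = x i) :
    ∀ (n : ℕ) (i), x ((τ ^ n) i) = x i := by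
  intro n
  induction n with
  | zero => intro i; rfl
  | succ n ih =>
    intro i
    rw [pow_succ, Equiv.Perm.mul_apply, ih (τ i), hx]

lemma sameCycle_const (x : Fin k → β) (hx : ∀ i, x (τ i) = x i)
    {i j : Fin k} (h : τ.SameCycle i j) : x i = x j := by
  obtain ⟨n, _, hn⟩ := h.exists_pow_eq'
  rw [← hn, iter_fixed τ x hx]

lemma fixed_pow_fixed {j : Fin k} (hj : τ j = j) : ∀ n : ℕ, (τ ^ n) j = j := by
  intro n
  induction n with
  | zero => rfl
  | succ n ih => rw [pow_succ, Equiv.Perm.mul_apply, hj, ih]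

lemma sameCycle_fixed {i j : Fin k} (hj : τ j = j) (h : τ.SameCycle j i) : i = j := by
  obtain ⟨n, _, hn⟩ := h.exists_pow_eq'
  rw [← hn, fixed_pow_fixed τ hj]

lemma orbit_prod (D : Finset β) (f : β → ℂ) :
    ∑ x ∈ Finset.univ.filter
        (fun x : Fin k → β => (∀ i, x i ∈ D) ∧ ∀ i, x (τ i) = x i),
      ∏ i, f (x i)
    = ∏ i ∈ Finset.Icc 1 k, (∑ a ∈ D, f a ^ i) ^
        (if i = 1 then k - τ.support.card else τ.cycleType.count i) := by
  letI s : Setoid (Fin k) :=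
    ⟨τ.SameCycle, ⟨fun a => Equiv.Perm.SameCycle.refl τ a,
      fun h => h.symm, fun h h' => h.trans h'⟩⟩
  -- size of an orbit
  set sz : Quotient s → ℕ := fun q => (Finset.univ.filter fun i => ⟦i⟧ = q).card with hsz
  have hmk_eq : ∀ i j : Fin k, (⟦i⟧ : Quotient s) = ⟦j⟧ ↔ τ.SameCycle i j := by
    intro i j; exact Quotient.eq
  -- fibers over fixed points / support points
  have hfib_fixed : ∀ j : Fin k, j ∉ τ.support →
      (Finset.univ.filter fun i => (⟦i⟧ : Quotient s) = ⟦j⟧) = {j} := by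
    intro j hj
    rw [Equiv.Perm.notMem_support] at hj
    ext i
    simp only [Finset.mem_filter, Finset.mem_univ, true_and, Finset.mem_singleton]
    rw [hmk_eq]
    constructor
    · intro h; exact sameCycle_fixed τ hj h.symm
    · rintro rfl; exact Equiv.Perm.SameCycle.refl τ _
  have hfib_supp : ∀ j : Fin k, j ∈ τ.support →
      (Finset.univ.filter fun i => (⟦i⟧ : Quotient s) = ⟦j⟧) = (τ.cycleOf j).support := by
    intro j hj
    ext i
    simp only [Finset.mem_filter, Finset.mem_univ, true_and]
    rw [hmk_eq, Equiv.Perm.mem_support_cycleOf_iff]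
    constructor
    · intro h; exact ⟨h.symm, hj⟩
    · intro h; exact h.1.symm
  have hsz_fixed : ∀ j : Fin k, j ∉ τ.support → sz ⟦j⟧ = 1 := by
    intro j hj; rw [hsz]; simp only []; rw [hfib_fixed j hj, Finset.card_singleton]
  have hsz_supp : ∀ j : Fin k, j ∈ τ.support → sz ⟦j⟧ = (τ.cycleOf j).support.card := by
    intro j hj; rw [hsz]; simp only []; rw [hfib_supp j hj]
  have hsz_two : ∀ j : Fin k, j ∈ τ.support → 2 ≤ sz ⟦j⟧ := by
    intro j hj
    rw [hsz_supp j hj]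
    exact (Equiv.Perm.isCycle_cycleOf τ (Equiv.Perm.mem_support.1 hj)).two_le_card_support
  have hout_mem : ∀ q : Quotient s, q.out ∈ Finset.univ.filter fun i => (⟦i⟧ : Quotient s) = q := by
    intro q
    simp only [Finset.mem_filter, Finset.mem_univ, true_and]
    exact Quotient.out_eq q
  -- Step A : reindex the sum by functions on the quotient
  have stepA : ∑ x ∈ Finset.univ.filter
        (fun x : Fin k → β => (∀ i, x i ∈ D) ∧ ∀ i, x (τ i) = x i),
      ∏ i, f (x i)
      = ∑ g ∈ Finset.univ.filter (fun g : Quotient s → β => ∀ q, g q ∈ D),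
          ∏ i, f (g ⟦i⟧) := by
    refine Finset.sum_nbij' (fun x q => x q.out) (fun g i => g ⟦i⟧) ?_ ?_ ?_ ?_ ?_
    · intro x hx
      simp only [Finset.mem_filter, Finset.mem_univ, true_and] at hx ⊢
      intro q; exact hx.1 q.out
    · intro g hg
      simp only [Finset.mem_filter, Finset.mem_univ, true_and] at hg ⊢
      refine ⟨fun i => hg _, fun i => ?_⟩
      have h2 : τ.SameCycle i (τ i) := ⟨1, by simp⟩
      exact congrArg g (Quotient.sound (Equiv.Perm.SameCycle.symm h2))
    · intro x hx
      simp only [Finset.mem_filter, Finset.mem_univ, true_and] at hx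
      funext i
      exact sameCycle_const τ x hx.2 (Quotient.mk_out i)
    · intro g _
      funext q
      simp only [Quotient.out_eq]
    · intro x hx
      simp only [Finset.mem_filter, Finset.mem_univ, true_and] at hx
      exact Finset.prod_congr rfl fun i _ =>
        congrArg f (sameCycle_const τ x hx.2 (Quotient.mk_out i)).symm
  -- Step B : group the product over each orbit
  have stepB : ∀ g : Quotient s → β,
      ∏ i, f (g ⟦i⟧) = ∏ q : Quotient s, f (g q) ^ sz q := by
    intro g
    rw [← Finset.prod_fiberwise' Finset.univ (fun i : Fin k => (⟦i⟧ : Quotient s))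
      (fun q => f (g q))]
    exact Finset.prod_congr rfl fun q _ => Finset.prod_const _
  -- Step C : sum over functions = product of power sums
  have stepC : ∑ g ∈ Finset.univ.filter (fun g : Quotient s → β => ∀ q, g q ∈ D),
      ∏ q : Quotient s, f (g q) ^ sz q
      = ∏ q : Quotient s, ∑ a ∈ D, f a ^ sz q := by
    rw [Finset.prod_univ_sum]
    apply Finset.sum_congr _ fun _ _ => rfl
    ext g
    simp [Fintype.mem_piFinset]
  -- Step D : group the orbits by their size
  have hmaps : ∀ q : Quotient s, sz q ∈ Finset.Icc 1 k := by
    intro q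
    rw [Finset.mem_Icc]
    constructor
    · rw [Nat.succ_le_iff, hsz, Finset.card_pos]
      exact ⟨q.out, hout_mem q⟩
    · calc sz q ≤ (Finset.univ : Finset (Fin k)).card := Finset.card_filter_le _ _
        _ = k := by simp
  have stepD : ∏ q : Quotient s, ∑ a ∈ D, f a ^ sz q
      = ∏ i ∈ Finset.Icc 1 k, (∑ a ∈ D, f a ^ i) ^
          (Finset.univ.filter fun q : Quotient s => sz q = i).card := by
    rw [← Finset.prod_fiberwise_of_maps_to' (fun q _ => hmaps q)
      (fun i => ∑ a ∈ D, f a ^ i)]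
    exact Finset.prod_congr rfl fun i _ => Finset.prod_const _
  -- Step E : count the orbits of each size
  have stepE : ∀ i ∈ Finset.Icc 1 k,
      (Finset.univ.filter fun q : Quotient s => sz q = i).card
      = if i = 1 then k - τ.support.card else τ.cycleType.count i := by
    intro i hi
    by_cases h1 : i = 1
    · subst h1
      rw [if_pos rfl]
      have : (Finset.univ.filter fun q : Quotient s => sz q = 1).card
          = τ.supportᶜ.card := by
        refine Finset.card_bij' (fun q _ => q.out) (fun j _ => ⟦j⟧) ?_ ?_ ?_ ?_
        · intro q hq
          simp only [Finset.mem_filter, Finset.mem_univ, true_and] at hq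
          rw [Finset.mem_compl]
          intro hmem
          have h2 := hsz_two q.out hmem
          rw [Quotient.out_eq, hq] at h2
          omega
        · intro j hj
          rw [Finset.mem_compl] at hj
          simp only [Finset.mem_filter, Finset.mem_univ, true_and]
          exact hsz_fixed j hj
        · intro q _; exact Quotient.out_eq q
        · intro j hj
          rw [Finset.mem_compl, Equiv.Perm.notMem_support] at hj
          exact sameCycle_fixed τ hj
            (Equiv.Perm.SameCycle.symm (Quotient.mk_out j : τ.SameCycle _ j))
      rw [this, Finset.card_compl, Fintype.card_fin]
    · rw [if_neg h1]
      have hi2 : 2 ≤ i := by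
        rw [Finset.mem_Icc] at hi; omega
      have hne : ∀ c ∈ (τ.cycleFactorsFinset.filter fun c => c.support.card = i),
          c.support.Nonempty := by
        intro c hc
        rw [Finset.mem_filter] at hc
        rw [← Finset.card_pos]
        have := ((Equiv.Perm.mem_cycleFactorsFinset_iff.1 hc.1).1).two_le_card_support
        omega
      have hmemsupp : ∀ (c : Equiv.Perm (Fin k)), c ∈ τ.cycleFactorsFinset →
          ∀ a ∈ c.support, a ∈ τ.support := by
        intro c hc a ha
        have hceq : c = τ.cycleOf a := Equiv.Perm.cycle_is_cycleOf ha hc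
        rw [hceq, Equiv.Perm.mem_support_cycleOf_iff] at ha
        exact ha.2
      have hkey : ∀ (c : Equiv.Perm (Fin k)), c ∈ τ.cycleFactorsFinset →
          ∀ a ∈ c.support, τ.cycleOf ((⟦a⟧ : Quotient s).out) = c := by
        intro c hc a ha
        have hceq : c = τ.cycleOf a := Equiv.Perm.cycle_is_cycleOf ha hc
        have hout_same : τ.SameCycle (⟦a⟧ : Quotient s).out a := Quotient.mk_out a
        rw [hout_same.cycleOf_eq, ← hceq]
      have hkey2 : ∀ (c : Equiv.Perm (Fin k)), c ∈ τ.cycleFactorsFinset →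
          ∀ a ∈ c.support, sz ⟦a⟧ = c.support.card := by
        intro c hc a ha
        have hceq : c = τ.cycleOf a := Equiv.Perm.cycle_is_cycleOf ha hc
        rw [hsz_supp a (hmemsupp c hc a ha), ← hceq]
      have hkey3 : ∀ (q : Quotient s), q.out ∈ τ.support →
          ∀ a ∈ (τ.cycleOf q.out).support, (⟦a⟧ : Quotient s) = q := by
        intro q hq a ha
        rw [Equiv.Perm.mem_support_cycleOf_iff] at ha
        have : (⟦a⟧ : Quotient s) = ⟦q.out⟧ :=
          Quotient.sound (Equiv.Perm.SameCycle.symm ha.1)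
        rw [this, Quotient.out_eq]
      have hcnt : (Finset.univ.filter fun q : Quotient s => sz q = i).card
          = (τ.cycleFactorsFinset.filter fun c => c.support.card = i).card := by
        have hsupp_of : ∀ q : Quotient s, sz q = i → q.out ∈ τ.support := by
          intro q hq
          by_contra hmem
          rw [← Quotient.out_eq q, hsz_fixed q.out hmem] at hq
          omega
        refine Finset.card_bij' (fun q _ => τ.cycleOf q.out)
          (fun c hc => ⟦c.support.min' (hne c hc)⟧) ?_ ?_ ?_ ?_
        · intro q hq
          simp only [Finset.mem_filter, Finset.mem_univ, true_and] at hq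
          have hs := hsupp_of q hq
          rw [Finset.mem_filter]
          refine ⟨Equiv.Perm.cycleOf_mem_cycleFactorsFinset_iff.2 hs, ?_⟩
          rw [← hsz_supp q.out hs, Quotient.out_eq, hq]
        · intro c hc
          simp only [Finset.mem_filter, Finset.mem_univ, true_and]
          have hc' := Finset.mem_filter.1 hc
          rw [hkey2 c hc'.1 _ (Finset.min'_mem _ (hne c hc)), hc'.2]
        · intro q hq
          simp only [Finset.mem_filter, Finset.mem_univ, true_and] at hq
          exact hkey3 q (hsupp_of q hq) _ (Finset.min'_mem _ _)
        · intro c hc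
          have hc' := Finset.mem_filter.1 hc
          exact hkey c hc'.1 _ (Finset.min'_mem _ (hne c hc))
      rw [hcnt, Equiv.Perm.cycleType_def, Multiset.count_map]
      simp only [Finset.card, Finset.filter_val]
      exact congrArg Multiset.card
        (Multiset.filter_congr (s := τ.cycleFactorsFinset.val)
          (p := fun c : Equiv.Perm (Fin k) => c.support.val.card = i)
          (q := fun a => i = (Finset.card ∘ Equiv.Perm.support) a)
          fun c _ => by simp [Function.comp, eq_comm])
  rw [stepA, Finset.sum_congr rfl (fun g _ => stepB g), stepC, stepD]
  exact Finset.prod_congr rfl fun i hi => by rw [stepE i hi]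

end orbit

section injsum
variable {k : ℕ} {β : Type*} [Fintype β]

lemma inj_sum_eq (D : Finset β) (f : β → ℂ) :
    ∑ x ∈ Finset.univ.filter
        (fun x : Fin k → β => (∀ i, x i ∈ D) ∧ ∀ i j, i ≠ j → x i ≠ x j),
      ∏ i, f (x i)
    = ∑ τ : Equiv.Perm (Fin k), ((Equiv.Perm.sign τ : ℤ) : ℂ) *
        ∏ i ∈ Finset.Icc 1 k, (∑ a ∈ D, f a ^ i) ^
          (if i = 1 then k - τ.support.card else τ.cycleType.count i) := by
  have hpair : ∀ x : Fin k → β,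
      (∀ i j, i ≠ j → x i ≠ x j) ↔ Function.Injective x := by
    intro x
    constructor
    · intro h a b hab
      by_contra hne
      exact h a b hne hab
    · intro h a b hne he
      exact hne (h he)
  symm
  calc ∑ τ : Equiv.Perm (Fin k), ((Equiv.Perm.sign τ : ℤ) : ℂ) *
        ∏ i ∈ Finset.Icc 1 k, (∑ a ∈ D, f a ^ i) ^
          (if i = 1 then k - τ.support.card else τ.cycleType.count i)
      = ∑ τ : Equiv.Perm (Fin k), ∑ x : Fin k → β,
          if (∀ i, x i ∈ D) ∧ ∀ i, x (τ i) = x i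
          then ((Equiv.Perm.sign τ : ℤ) : ℂ) * ∏ i, f (x i) else 0 := by
        refine Finset.sum_congr rfl fun τ _ => ?_
        rw [← orbit_prod τ D f, Finset.mul_sum, ← Finset.sum_filter]
    _ = ∑ x : Fin k → β, ∑ τ : Equiv.Perm (Fin k),
          if (∀ i, x i ∈ D) ∧ ∀ i, x (τ i) = x i
          then ((Equiv.Perm.sign τ : ℤ) : ℂ) * ∏ i, f (x i) else 0 := Finset.sum_comm
    _ = ∑ x : Fin k → β,
          if (∀ i, x i ∈ D)
          then (if Function.Injective x then 1 else 0) * ∏ i, f (x i) else 0 := by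
        refine Finset.sum_congr rfl fun x _ => ?_
        by_cases hxD : ∀ i, x i ∈ D
        · rw [if_pos hxD, ← sign_fiber_sum x, Finset.sum_filter, Finset.sum_mul]
          refine Finset.sum_congr rfl fun τ _ => ?_
          by_cases hfix : ∀ i, x (τ i) = x i
          · simp [hfix, hxD]
          · simp [hfix, hxD]
        · rw [if_neg hxD]
          refine Finset.sum_eq_zero fun τ _ => if_neg (by tauto)
    _ = ∑ x ∈ Finset.univ.filter
          (fun x : Fin k → β => (∀ i, x i ∈ D) ∧ ∀ i j, i ≠ j → x i ≠ x j),
        ∏ i, f (x i) := by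
        rw [Finset.sum_filter]
        refine Finset.sum_congr rfl fun x _ => ?_
        by_cases hxD : ∀ i, x i ∈ D
        · by_cases hinj : Function.Injective x
          · have h2 := (hpair x).2 hinj
            rw [if_pos hxD, if_pos hinj, if_pos ⟨hxD, h2⟩, one_mul]
          · have : ¬ ∀ i j, i ≠ j → x i ≠ x j := fun h => hinj ((hpair x).1 h)
            simp [hxD, hinj, this]
        · simp [hxD]

end injsum

lemma descFactorial_cast_prod (n : ℕ) : ∀ k : ℕ,
    ∏ i ∈ Finset.range k, ((n : ℂ) - i) = (n.descFactorial k : ℂ) := by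
  intro k
  induction k with
  | zero => simp
  | succ k ih =>
    rw [Finset.prod_range_succ, ih, Nat.descFactorial_succ, Nat.cast_mul, mul_comm]
    by_cases h : k ≤ n
    · rw [Nat.cast_sub h]
    · have h1 : n.descFactorial k = 0 := by
        rw [Nat.descFactorial_eq_zero_iff_lt]; omega
      have h2 : n - k = 0 := by omega
      rw [h1, h2]
      simp

set_option maxHeartbeats 1000000 in
/-- The character-sum expansion: the number `N_ord(k,b,D)` of ordered tuples in
`D^k` with pairwise distinct coordinates summing to `b` equals
`p⁻¹ (n)_k + p⁻¹ ∑_{χ≠χ₀} χ⁻¹(b) ∑_{τ∈S_k} sign(τ) ∏_i (∑_{a∈D} χ(a)^i)^{c_i(τ)}`. -/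
theorem ordered_count_character_expansion (p : ℕ) [Fact p.Prime]
    (D : Finset (ZMod p)) (hD : D.Nonempty) (n : ℕ) (hn : D.card = n)
    (b : ZMod p) (k : ℕ) (hk : 1 ≤ k)
    (c : Equiv.Perm (Fin k) → ℕ → ℕ)
    (hc : ∀ τ i, c τ i =
      if i = 1 then k - τ.support.card else τ.cycleType.count i) :
    (((Finset.univ.filter
          (fun x : Fin k → ZMod p =>
            (∀ i, x i ∈ D) ∧ (∀ i j, i ≠ j → x i ≠ x j) ∧ ∑ i, x i = b)).card : ℂ)) =
      (p : ℂ)⁻¹ * ∏ i ∈ Finset.range k, ((n : ℂ) - i) +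
      (p : ℂ)⁻¹ * ∑ a ∈ Finset.univ.filter (fun a : ZMod p => a ≠ 0),
        (ep p a b)⁻¹ *
          ∑ τ : Equiv.Perm (Fin k), ((Equiv.Perm.sign τ : ℤ) : ℂ) *
            ∏ i ∈ Finset.Icc 1 k, (∑ x ∈ D, (ep p a x) ^ i) ^ c τ i := by
  set Inj := Finset.univ.filter
    (fun x : Fin k → ZMod p => (∀ i, x i ∈ D) ∧ ∀ i j, i ≠ j → x i ≠ x j) with hInj
  set S : ZMod p → ℂ := fun a => ∑ x ∈ Inj, ∏ i, ep p a (x i) with hS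
  -- rewrite the left-hand side as an indicator sum
  have h0 : Finset.univ.filter
      (fun x : Fin k → ZMod p =>
        (∀ i, x i ∈ D) ∧ (∀ i j, i ≠ j → x i ≠ x j) ∧ ∑ i, x i = b)
      = Inj.filter (fun x => ∑ i, x i = b) := by
    rw [hInj, Finset.filter_filter]
    apply Finset.filter_congr
    intro x _
    tauto
  have h1 : (((Finset.univ.filter
      (fun x : Fin k → ZMod p =>
        (∀ i, x i ∈ D) ∧ (∀ i j, i ≠ j → x i ≠ x j) ∧ ∑ i, x i = b)).card : ℕ) : ℂ)
      = ∑ x ∈ Inj, if ∑ i, x i = b then (1 : ℂ) else 0 := by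
    rw [h0, Finset.card_filter]
    push_cast
    simp [apply_ite (fun m : ℕ => (m : ℂ))]
  -- the indicator via orthogonality
  have h2 : ∀ x : Fin k → ZMod p, (if ∑ i, x i = b then (1 : ℂ) else 0)
      = (p : ℂ)⁻¹ * ∑ a : ZMod p, (ep p a b)⁻¹ * ∏ i, ep p a (x i) := by
    intro x
    have hsplit : ∀ a : ZMod p, ep p a (∑ i, x i - b)
        = (ep p a b)⁻¹ * ∏ i, ep p a (x i) := by
      intro a
      rw [← ep_sum p a Finset.univ x, mul_comm]
      rw [eq_mul_inv_iff_mul_eq₀ (ep_ne_zero p a b), ← ep_add, sub_add_cancel]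
    have horth := ep_orth p (∑ i, x i - b)
    rw [Finset.sum_congr rfl fun a _ => (hsplit a).symm, horth]
    by_cases h : ∑ i, x i = b
    · rw [if_pos h, if_pos (by rw [h, sub_self]), inv_mul_cancel₀ (hp0 p)]
    · rw [if_neg h, if_neg (sub_ne_zero.2 h), mul_zero]
  have key : (((Finset.univ.filter
      (fun x : Fin k → ZMod p =>
        (∀ i, x i ∈ D) ∧ (∀ i j, i ≠ j → x i ≠ x j) ∧ ∑ i, x i = b)).card : ℕ) : ℂ)
      = (p : ℂ)⁻¹ * ∑ a : ZMod p, (ep p a b)⁻¹ * S a := by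
    rw [h1, Finset.sum_congr rfl fun x _ => h2 x, ← Finset.mul_sum]
    congr 1
    rw [Finset.sum_comm]
    refine Finset.sum_congr rfl fun a _ => ?_
    rw [hS, Finset.mul_sum]
  -- split off the trivial character
  have hsplit0 : ∑ a : ZMod p, (ep p a b)⁻¹ * S a
      = (ep p 0 b)⁻¹ * S 0
        + ∑ a ∈ Finset.univ.filter (fun a : ZMod p => a ≠ 0), (ep p a b)⁻¹ * S a := by
    rw [← Finset.sum_filter_add_sum_filter_not Finset.univ (fun a : ZMod p => a = 0)]
    congr 1
    rw [Finset.filter_eq' Finset.univ (0 : ZMod p), if_pos (Finset.mem_univ _),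
      Finset.sum_singleton]
  have hS0 : S 0 = (Inj.card : ℂ) := by
    rw [hS]
    simp [ep_zero_left]
  have hcard : Inj.card = n.descFactorial k := by
    have hbij : Inj.card = Fintype.card (Fin k ↪ {a // a ∈ D}) := by
      rw [← Finset.card_univ]
      refine Finset.card_bij'
        (fun x hx => ⟨fun i => (⟨x i, ((Finset.mem_filter.1 hx).2).1 i⟩ : {a // a ∈ D}),
          fun i j hij => by
            by_contra hne
            exact ((Finset.mem_filter.1 hx).2).2 i j hne (congrArg Subtype.val hij)⟩)
        (fun e _ => fun i => (e i : ZMod p)) ?_ ?_ ?_ ?_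
      · intro x hx; exact Finset.mem_univ _
      · intro e _
        rw [hInj, Finset.mem_filter]
        refine ⟨Finset.mem_univ _, fun i => (e i).2, fun i j hij hval => ?_⟩
        exact hij (e.injective (Subtype.ext hval))
      · intro x hx; rfl
      · intro e _
        ext i
        rfl
    rw [hbij, Fintype.card_embedding_eq, Fintype.card_coe, hn, Fintype.card_fin]
  rw [key, hsplit0, mul_add]
  congr 1
  · rw [hS0, hcard, ep_zero_left, inv_one, one_mul, descFactorial_cast_prod]
  · congr 1
    refine Finset.sum_congr rfl fun a _ => ?_
    congr 1
    simp only [hS, hInj, hc]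
    refine Eq.trans ?_ (inj_sum_eq (k := k) D (fun y => ep p a y))
    refine Finset.sum_congr ?_ fun _ _ => rfl
    ext x
    simp only [Finset.mem_filter]
end

section
/- Let $p$ be a prime and $b \in \mathbb{F}_p$, and let $N(k,b)$ denote the number of $k$-element subsets $S \subseteq \mathbb{F}_p^*$ with $\sum_{x \in S} x = b$. Then $\left| N(k,b) - p^{-1}\binom{p-1}{k} \right| \le 1$. -/
open scoped Classical
open Finset

namespace SubsetSumAux

variable (p : ℕ) [Fact p.Prime]

def N (k : ℕ) (b : ZMod p) : ℕ :=
  (((Finset.univ.filter (fun x : ZMod p => x ≠ 0)).powersetCard k).filter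
      (fun S => ∑ x ∈ S, x = b)).card

def M (k : ℕ) (b : ZMod p) : ℕ :=
  (((Finset.univ : Finset (ZMod p)).powersetCard k).filter
      (fun S => ∑ x ∈ S, x = b)).card

variable {p}

lemma card_U : (Finset.univ.filter (fun x : ZMod p => x ≠ 0)).card = p - 1 := by
  rw [Finset.filter_ne', Finset.card_erase_of_mem (Finset.mem_univ _),
    Finset.card_univ, ZMod.card]

lemma N_mul (k : ℕ) {c : ZMod p} (hc : c ≠ 0) (b : ZMod p) :
    N p k b = N p k (c * b) := by
  refine Finset.card_bij' (fun S _ => S.image (c * ·)) (fun S _ => S.image (c⁻¹ * ·))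
    ?_ ?_ ?_ ?_
  · intro S hS
    simp only [Finset.mem_filter, Finset.mem_powersetCard] at hS ⊢
    obtain ⟨⟨hsub, hcard⟩, hsum⟩ := hS
    refine ⟨⟨?_, ?_⟩, ?_⟩
    · intro x hx
      simp only [Finset.mem_image] at hx
      obtain ⟨y, hy, rfl⟩ := hx
      have := hsub hy
      simp only [Finset.mem_filter] at this ⊢
      exact ⟨Finset.mem_univ _, mul_ne_zero hc this.2⟩
    · rw [Finset.card_image_of_injective _ (mul_right_injective₀ hc)]; exact hcard
    · rw [Finset.sum_image (fun x _ y _ h => mul_left_cancel₀ hc h), ← Finset.mul_sum, hsum]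
  · intro S hS
    simp only [Finset.mem_filter, Finset.mem_powersetCard] at hS ⊢
    obtain ⟨⟨hsub, hcard⟩, hsum⟩ := hS
    have hc' : c⁻¹ ≠ 0 := inv_ne_zero hc
    refine ⟨⟨?_, ?_⟩, ?_⟩
    · intro x hx
      simp only [Finset.mem_image] at hx
      obtain ⟨y, hy, rfl⟩ := hx
      have := hsub hy
      simp only [Finset.mem_filter] at this ⊢
      exact ⟨Finset.mem_univ _, mul_ne_zero hc' this.2⟩
    · rw [Finset.card_image_of_injective _ (mul_right_injective₀ hc')]; exact hcard
    · rw [Finset.sum_image (fun x _ y _ h => mul_left_cancel₀ hc' h), ← Finset.mul_sum, hsum,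
        inv_mul_cancel_left₀ hc]
  · intro S hS
    rw [Finset.image_image]
    have : (c⁻¹ * ·) ∘ (c * ·) = id := by
      funext x; simp [inv_mul_cancel_left₀ hc]
    rw [this, Finset.image_id]
  · intro S hS
    rw [Finset.image_image]
    have : (c * ·) ∘ (c⁻¹ * ·) = id := by
      funext x; simp [mul_inv_cancel_left₀ hc]
    rw [this, Finset.image_id]

lemma M_add (k : ℕ) (c b : ZMod p) : M p k b = M p k (b + k * c) := by
  refine Finset.card_bij' (fun S _ => S.image (· + c)) (fun S _ => S.image (· + (-c)))
    ?_ ?_ ?_ ?_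
  · intro S hS
    simp only [Finset.mem_filter, Finset.mem_powersetCard] at hS ⊢
    obtain ⟨⟨hsub, hcard⟩, hsum⟩ := hS
    have hinj : Function.Injective (· + c) := add_left_injective c
    refine ⟨⟨fun x _ => Finset.mem_univ x, ?_⟩, ?_⟩
    · rw [Finset.card_image_of_injective _ hinj]; exact hcard
    · rw [Finset.sum_image (fun x _ y _ h => hinj h), Finset.sum_add_distrib, hsum,
        Finset.sum_const, hcard, nsmul_eq_mul]
  · intro S hS
    simp only [Finset.mem_filter, Finset.mem_powersetCard] at hS ⊢
    obtain ⟨⟨hsub, hcard⟩, hsum⟩ := hS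
    have hinj : Function.Injective (· + (-c)) := add_left_injective (-c)
    refine ⟨⟨fun x _ => Finset.mem_univ x, ?_⟩, ?_⟩
    · rw [Finset.card_image_of_injective _ hinj]; exact hcard
    · rw [Finset.sum_image (fun x _ y _ h => hinj h), Finset.sum_add_distrib, hsum,
        Finset.sum_const, hcard, nsmul_eq_mul]
      ring
  · intro S hS
    rw [Finset.image_image]
    have : (· + (-c)) ∘ (· + c) = id := by funext x; simp
    rw [this, Finset.image_id]
  · intro S hS
    rw [Finset.image_image]
    have : (· + c) ∘ (· + (-c)) = id := by funext x; simp
    rw [this, Finset.image_id]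

lemma M_const {k : ℕ} (hk0 : 0 < k) (hk : k < p) (b b' : ZMod p) :
    M p k b = M p k b' := by
  have hkz : (k : ZMod p) ≠ 0 := by
    rw [Ne, ZMod.natCast_eq_zero_iff]
    exact fun h => absurd (Nat.le_of_dvd hk0 h) (not_le.mpr hk)
  have := M_add (p := p) k ((b' - b) * (k : ZMod p)⁻¹) b
  rwa [mul_comm (k : ZMod p), mul_assoc, inv_mul_cancel₀ hkz, mul_one,
    add_sub_cancel] at this

lemma M_succ (k : ℕ) (b : ZMod p) : M p (k + 1) b = N p (k + 1) b + N p k b := by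
  classical
  have hsplit := Finset.card_filter_add_card_filter_not
    (s := ((Finset.univ : Finset (ZMod p)).powersetCard (k + 1)).filter
      (fun S => ∑ x ∈ S, x = b)) (p := fun S => (0 : ZMod p) ∈ S)
  have h1 : ((((Finset.univ : Finset (ZMod p)).powersetCard (k + 1)).filter
      (fun S => ∑ x ∈ S, x = b)).filter (fun S => (0 : ZMod p) ∉ S)).card
      = N p (k + 1) b := by
    congr 1
    ext S
    simp only [Finset.mem_filter, Finset.mem_powersetCard]
    constructor
    · rintro ⟨⟨⟨hsub, hcard⟩, hsum⟩, h0⟩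
      refine ⟨⟨fun x hx => ?_, hcard⟩, hsum⟩
      simp only [Finset.mem_filter]
      exact ⟨Finset.mem_univ _, fun he => h0 (he ▸ hx)⟩
    · rintro ⟨⟨hsub, hcard⟩, hsum⟩
      refine ⟨⟨⟨fun x _ => Finset.mem_univ _, hcard⟩, hsum⟩, fun h0 => ?_⟩
      have := hsub h0
      simp only [Finset.mem_filter] at this
      exact this.2 rfl
  have h2 : ((((Finset.univ : Finset (ZMod p)).powersetCard (k + 1)).filter
      (fun S => ∑ x ∈ S, x = b)).filter (fun S => (0 : ZMod p) ∈ S)).card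
      = N p k b := by
    refine Finset.card_bij' (fun S _ => S.erase 0) (fun T _ => insert 0 T) ?_ ?_ ?_ ?_
    · intro S hS
      simp only [Finset.mem_filter, Finset.mem_powersetCard] at hS ⊢
      obtain ⟨⟨⟨hsub, hcard⟩, hsum⟩, h0⟩ := hS
      refine ⟨⟨?_, ?_⟩, ?_⟩
      · intro x hx
        rw [Finset.mem_erase] at hx
        simp only [Finset.mem_filter]
        exact ⟨Finset.mem_univ _, hx.1⟩
      · simp [Finset.card_erase_of_mem h0, hcard]
      · have he : ∑ x ∈ S.erase 0, x = ∑ x ∈ S, x := Finset.sum_erase S rfl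
        rw [he, hsum]
    · intro T hT
      simp only [Finset.mem_filter, Finset.mem_powersetCard] at hT ⊢
      obtain ⟨⟨hsub, hcard⟩, hsum⟩ := hT
      have h0T : (0 : ZMod p) ∉ T := fun h => by
        have := hsub h
        simp only [Finset.mem_filter] at this
        exact this.2 rfl
      refine ⟨⟨⟨fun _ _ => Finset.mem_univ _, ?_⟩, ?_⟩, Finset.mem_insert_self _ _⟩
      · rw [Finset.card_insert_of_notMem h0T, hcard]
      · rw [Finset.sum_insert h0T, hsum, zero_add]
    · intro S hS
      simp only [Finset.mem_filter] at hS
      exact Finset.insert_erase hS.2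
    · intro T hT
      simp only [Finset.mem_filter, Finset.mem_powersetCard] at hT
      obtain ⟨⟨hsub, _⟩, _⟩ := hT
      have h0T : (0 : ZMod p) ∉ T := fun h => by
        have := hsub h
        simp only [Finset.mem_filter] at this
        exact this.2 rfl
      exact Finset.erase_insert h0T
  unfold M
  rw [← hsplit, h1, h2, add_comm]

lemma N_zero_b : ∀ b : ZMod p, b ≠ 0 → N p 0 b = 0 := by
  intro b hb
  simp [N, Finset.powersetCard_zero, Finset.filter_singleton, Ne.symm hb]

lemma N_zero_zero : N p 0 (0 : ZMod p) = 1 := by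
  simp [N, Finset.powersetCard_zero, Finset.filter_singleton]

lemma eps_eq (k : ℕ) (hk : k < p) :
    (N p k 0 : ℤ) - N p k 1 = (-1) ^ k := by
  induction k with
  | zero =>
    have h1 : (1 : ZMod p) ≠ 0 := one_ne_zero
    rw [N_zero_zero, N_zero_b 1 h1]
    simp
  | succ k ih =>
    have hk' : k < p := Nat.lt_of_succ_lt hk
    have hM := M_const (p := p) (k := k + 1) (Nat.succ_pos k) hk (0 : ZMod p) 1
    have e0 := M_succ (p := p) k (0 : ZMod p)
    have e1 := M_succ (p := p) k (1 : ZMod p)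
    have h0 : (N p (k+1) 0 : ℤ) = (M p (k+1) 0 : ℤ) - N p k 0 := by
      have := M_succ (p := p) k (0 : ZMod p); omega
    have h1 : (N p (k+1) 1 : ℤ) = (M p (k+1) 1 : ℤ) - N p k 1 := by
      have := M_succ (p := p) k (1 : ZMod p); omega
    rw [h0, h1, hM]
    have := ih hk'
    rw [pow_succ]
    linarith

lemma sum_N (k : ℕ) : ∑ b : ZMod p, N p k b = (p - 1).choose k := by
  have := Finset.card_eq_sum_card_fiberwise
    (s := (Finset.univ.filter (fun x : ZMod p => x ≠ 0)).powersetCard k)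
    (t := (Finset.univ : Finset (ZMod p))) (f := fun S => ∑ x ∈ S, x)
    (fun S _ => Finset.mem_univ _)
  rw [Finset.card_powersetCard, card_U] at this
  exact this.symm

lemma N_const {k : ℕ} {b : ZMod p} (hb : b ≠ 0) : N p k b = N p k 1 := by
  have := N_mul (p := p) k hb (1 : ZMod p)
  rw [mul_one] at this
  exact this.symm

lemma key (k : ℕ) (hk : k < p) :
    ((p - 1).choose k : ℤ) = p * N p k 1 + (-1) ^ k := by
  have hsum := sum_N (p := p) k
  have hsplit : ∑ b : ZMod p, N p k b
      = N p k 0 + ∑ b ∈ Finset.univ.erase (0 : ZMod p), N p k b := by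
    rw [add_comm]
    exact (Finset.sum_erase_add _ _ (Finset.mem_univ 0)).symm
  have hconst : ∑ b ∈ Finset.univ.erase (0 : ZMod p), N p k b
      = (p - 1) * N p k 1 := by
    have hc : ∀ b ∈ Finset.univ.erase (0 : ZMod p), N p k b = N p k 1 :=
      fun b hb => N_const (Finset.mem_erase.mp hb).1
    rw [Finset.sum_congr rfl hc, Finset.sum_const,
      Finset.card_erase_of_mem (Finset.mem_univ _),
      Finset.card_univ, ZMod.card, smul_eq_mul]
  have heps := eps_eq (p := p) k hk
  have hp1 : 1 ≤ p := (Fact.out : p.Prime).one_lt.le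
  rw [hsplit, hconst] at hsum
  have : ((p - 1 : ℕ) : ℤ) = (p : ℤ) - 1 := by
    omega
  push_cast [← hsum, this]
  linarith

end SubsetSumAux

/-- The case `m = 1` of the Odlyzko–Stanley count: since `Φ(𝔽_p^*) = 1`, the
number `N(k,b)` of `k`-subsets of `𝔽_p^*` summing to `b` satisfies
`|N(k,b) - p⁻¹ C(p-1,k)| ≤ C(1+k-1, k) = 1`. -/
theorem subset_sum_units_bound (p : ℕ) [Fact p.Prime] (b : ZMod p) (k : ℕ) :
    |((((Finset.univ.filter (fun x : ZMod p => x ≠ 0)).powersetCard k).filter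
          (fun S => ∑ x ∈ S, x = b)).card : ℝ) -
        (p : ℝ)⁻¹ * ((p - 1).choose k : ℝ)| ≤ 1 := by
  have hp : (0 : ℝ) < p := by
    exact_mod_cast (Fact.out : p.Prime).pos
  show |((SubsetSumAux.N p k b : ℝ)) - (p : ℝ)⁻¹ * ((p - 1).choose k : ℝ)| ≤ 1
  have hpp : 0 < p := (Fact.out : p.Prime).pos
  rcases lt_or_ge k p with hk | hk
  · have hkey := SubsetSumAux.key (p := p) k hk
    have hkeyR : ((p - 1).choose k : ℝ) = p * SubsetSumAux.N p k 1 + (-1) ^ k := by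
      exact_mod_cast hkey
    have heps := SubsetSumAux.eps_eq (p := p) k hk
    have hpne : (p : ℝ) ≠ 0 := hp.ne'
    have h1p : (1 : ℝ) / p ≤ 1 := by
      rw [div_le_one hp]; exact_mod_cast (Fact.out : p.Prime).one_lt.le
    have h1pn : (0 : ℝ) ≤ 1 / p := by positivity
    have hChoose : (p : ℝ)⁻¹ * ((p - 1).choose k : ℝ)
        = (SubsetSumAux.N p k 1 : ℝ) + (-1) ^ k / p := by
      rw [hkeyR]; field_simp
    rcases eq_or_ne b 0 with rfl | hb
    · have hN0 : (SubsetSumAux.N p k 0 : ℝ) = (SubsetSumAux.N p k 1 : ℝ) + (-1) ^ k := by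
        have h : (SubsetSumAux.N p k 0 : ℤ) = SubsetSumAux.N p k 1 + (-1) ^ k := by
          linarith
        exact_mod_cast h
      rw [hN0, hChoose]
      have h2 : (SubsetSumAux.N p k 1 : ℝ) + (-1) ^ k
          - ((SubsetSumAux.N p k 1 : ℝ) + (-1) ^ k / p) = (-1) ^ k * (1 - 1 / p) := by
        ring
      rw [h2, abs_mul, abs_pow, abs_neg, abs_one, one_pow, one_mul,
        abs_of_nonneg (by linarith : (0:ℝ) ≤ 1 - 1 / p)]
      linarith
    · rw [SubsetSumAux.N_const (p := p) hb, hChoose]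
      have h2 : (SubsetSumAux.N p k 1 : ℝ)
          - ((SubsetSumAux.N p k 1 : ℝ) + (-1) ^ k / p) = -((-1) ^ k / p) := by
        ring
      rw [h2, abs_neg, abs_div, abs_pow, abs_neg, abs_one, one_pow,
        abs_of_pos hp]
      linarith
  · have hN : SubsetSumAux.N p k b = 0 := by
      rw [SubsetSumAux.N, Finset.card_eq_zero]
      have : (Finset.univ.filter (fun x : ZMod p => x ≠ 0)).powersetCard k = ∅ := by
        rw [Finset.powersetCard_eq_empty]
        rw [SubsetSumAux.card_U]
        omega
      rw [this, Finset.filter_empty]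
    have hCh : (p - 1).choose k = 0 := Nat.choose_eq_zero_of_lt (by omega)
    rw [hN, hCh]
    simp
end

section
/- Let $p$ be a prime, $H \le \mathbb{F}_p^*$ a subgroup with $|H| = s$, and suppose that for every nontrivial additive character $\chi$ of $\mathbb{F}_p$ one has $|\sum_{x \in H} \chi(x)| \le B$ for some real $B \ge 0$. Let $M(k,b)$ be the number of $k$-element subsets $T \subseteq H$ with $\sum_{x \in T} x = b$. Then $\left| M(k,b) - p^{-1}\binom{s}{k} \right| \le \binom{B + k - 1}{k}$. -/
open scoped Classical

open Finset

/-- Rising-factorial binomial ratio `C(B+k-1,k)`. -/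
noncomputable def cB (B : ℝ) (k : ℕ) : ℝ := (∏ j ∈ Finset.range k, (B + j)) / (Nat.factorial k)

lemma cB_nonneg {B : ℝ} (hB : 0 ≤ B) (k : ℕ) : 0 ≤ cB B k := by
  apply div_nonneg
  · exact Finset.prod_nonneg fun j _ => by positivity
  · positivity

lemma hockey (B : ℝ) : ∀ k : ℕ, B * ∑ i ∈ Finset.range k, cB B i = k * cB B k := by
  intro k
  induction k with
  | zero => simp
  | succ n ih =>
    rw [Finset.sum_range_succ, mul_add, ih]
    have h1 : (Nat.factorial n : ℝ) ≠ 0 := by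
      exact_mod_cast (Nat.factorial_pos n).ne'
    have h2 : ((n : ℝ) + 1) ≠ 0 := by positivity
    simp only [cB, Finset.prod_range_succ, Nat.factorial_succ]
    push_cast
    field_simp
    ring

noncomputable def esymmC {σ : Type*} [Fintype σ] (z : σ → ℂ) (n : ℕ) : ℂ :=
  ((Finset.univ : Finset σ).val.map z).esymm n

lemma esymmC_zero {σ : Type*} [Fintype σ] (z : σ → ℂ) : esymmC z 0 = 1 := by
  simp [esymmC, Multiset.esymm]

lemma newtonC {σ : Type*} [Fintype σ] (z : σ → ℂ) (k : ℕ) :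
    (k : ℂ) * esymmC z k = (-1) ^ (k + 1) *
      ∑ a ∈ (Finset.HasAntidiagonal.antidiagonal k).filter (fun a => a.1 < k),
        (-1) ^ a.1 * esymmC z a.1 * ∑ j : σ, z j ^ a.2 := by
  have h := congrArg (MvPolynomial.aeval z) (MvPolynomial.mul_esymm_eq_sum σ ℂ k)
  have he : ∀ n, MvPolynomial.eval z (MvPolynomial.esymm σ ℂ n) = esymmC z n := fun n =>
    MvPolynomial.aeval_esymm_eq_multiset_esymm σ ℂ n z
  simpa [MvPolynomial.psum, MvPolynomial.aeval_esymm_eq_multiset_esymm, esymmC, he] using h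

lemma esymmC_bound {σ : Type*} [Fintype σ] (B : ℝ) (hB0 : 0 ≤ B) (z : σ → ℂ) :
    ∀ k : ℕ, (∀ m : ℕ, 1 ≤ m → m ≤ k → ‖∑ j : σ, z j ^ m‖ ≤ B) →
      ‖esymmC z k‖ ≤ cB B k := by
  intro k
  induction k using Nat.strong_induction_on with
  | _ k ih =>
    intro hp
    rcases Nat.eq_zero_or_pos k with rfl | hk
    · simp [esymmC_zero, cB]
    · have hknorm : (k : ℝ) * ‖esymmC z k‖ ≤ B * ∑ i ∈ Finset.range k, cB B i := by
        calc (k : ℝ) * ‖esymmC z k‖ = ‖(k : ℂ) * esymmC z k‖ := by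
              rw [norm_mul, Complex.norm_natCast]
          _ = ‖∑ a ∈ (Finset.HasAntidiagonal.antidiagonal k).filter (fun a => a.1 < k),
                (-1 : ℂ) ^ a.1 * esymmC z a.1 * ∑ j : σ, z j ^ a.2‖ := by
              rw [newtonC z k, norm_mul, norm_pow, norm_neg, norm_one, one_pow, one_mul]
          _ ≤ ∑ a ∈ (Finset.HasAntidiagonal.antidiagonal k).filter (fun a => a.1 < k),
                ‖(-1 : ℂ) ^ a.1 * esymmC z a.1 * ∑ j : σ, z j ^ a.2‖ :=
              norm_sum_le _ _
          _ ≤ ∑ a ∈ (Finset.HasAntidiagonal.antidiagonal k).filter (fun a => a.1 < k), cB B a.1 * B := by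
              apply Finset.sum_le_sum
              intro a ha
              rw [Finset.mem_filter, Finset.HasAntidiagonal.mem_antidiagonal] at ha
              obtain ⟨hsum, hlt⟩ := ha
              rw [norm_mul, norm_mul, norm_pow, norm_neg, norm_one, one_pow, one_mul]
              have hE : ‖esymmC z a.1‖ ≤ cB B a.1 :=
                ih a.1 hlt (fun m h1 h2 => hp m h1 (h2.trans hlt.le))
              have hP : ‖∑ j : σ, z j ^ a.2‖ ≤ B := by
                apply hp
                · omega
                · omega
              exact mul_le_mul hE hP (norm_nonneg _) ((norm_nonneg _).trans hE)
          _ = ∑ i ∈ Finset.range k, cB B i * B := by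
              apply Finset.sum_nbij' (fun a => a.1) (fun i => (i, k - i))
              · intro a ha
                rw [Finset.mem_filter] at ha
                exact Finset.mem_range.2 ha.2
              · intro i hi
                rw [Finset.mem_range] at hi
                rw [Finset.mem_filter, Finset.HasAntidiagonal.mem_antidiagonal]
                exact ⟨by omega, by omega⟩
              · intro a ha
                rw [Finset.mem_filter, Finset.HasAntidiagonal.mem_antidiagonal] at ha
                have : k - a.1 = a.2 := by omega
                simp [this]
              · intro i hi
                rfl
              · intro a ha
                rfl
          _ = B * ∑ i ∈ Finset.range k, cB B i := by rw [← Finset.sum_mul, mul_comm]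
      rw [hockey B k] at hknorm
      have hkpos : (0 : ℝ) < k := by exact_mod_cast hk
      exact le_of_mul_le_mul_left hknorm hkpos

/-- Lemma 3.2 with the exponential-sum bound abstracted: if `H ≤ 𝔽_p^*` is a
subgroup of order `s` all of whose nontrivial character sums are bounded by
`B`, then the number `M(k,b)` of `k`-subsets of `H` summing to `b` satisfies
`|M(k,b) - p⁻¹ C(s,k)| ≤ C(B+k-1, k)`. -/
theorem subgroup_subset_sum_bound (p : ℕ) [Fact p.Prime]
    (G : Subgroup (ZMod p)ˣ) (H : Finset (ZMod p))
    (hH : H = Finset.image (fun g : (ZMod p)ˣ => (g : ZMod p))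
      (Finset.univ.filter (fun g => g ∈ G)))
    (s : ℕ) (hs : H.card = s) (B : ℝ) (hB0 : 0 ≤ B)
    (hB : ∀ a : ZMod p, a ≠ 0 → ‖∑ x ∈ H, ep p a x‖ ≤ B)
    (b : ZMod p) (k : ℕ) :
    |(((H.powersetCard k).filter (fun T => ∑ x ∈ T, x = b)).card : ℝ) -
        (p : ℝ)⁻¹ * (s.choose k : ℝ)| ≤
      (∏ i ∈ Finset.range k, (B + k - 1 - i)) / (Nat.factorial k : ℝ) := by
  have hp2 : 2 ≤ p := (Fact.out : p.Prime).two_le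
  haveI : NeZero p := ⟨by omega⟩
  -- rewrite the RHS as cB B k
  have hRHS : (∏ i ∈ Finset.range k, (B + k - 1 - i)) / (Nat.factorial k : ℝ) = cB B k := by
    unfold cB
    congr 1
    rw [← Finset.prod_range_reflect]
    apply Finset.prod_congr rfl
    intro i hi
    rw [Finset.mem_range] at hi
    have h1 : k - 1 - i = k - (1 + i) := by omega
    rw [h1, Nat.cast_sub (by omega)]
    push_cast
    ring
  rw [hRHS]
  -- s < p
  have hsp : s < p := by
    have h1 : H.card ≤ (Finset.univ.filter (fun g : (ZMod p)ˣ => g ∈ G)).card := by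
      rw [hH]; exact Finset.card_image_le
    have h2 : (Finset.univ.filter (fun g : (ZMod p)ˣ => g ∈ G)).card ≤
        Fintype.card (ZMod p)ˣ := by
      classical exact (Finset.card_filter_le _ _).trans (le_of_eq (Finset.card_univ))
    have h3 : Fintype.card (ZMod p)ˣ = p - 1 := ZMod.card_units p
    omega
  by_cases hks : k ≤ s
  swap
  · -- trivial case k > s
    have hempty : H.powersetCard k = ∅ := Finset.powersetCard_eq_empty.2 (by omega)
    rw [hempty, Nat.choose_eq_zero_of_lt (by omega)]
    simp [cB_nonneg hB0 k]
  -- character setup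
  set ζ : ℂ := Complex.exp (2 * Real.pi * Complex.I / p) with hζdef
  have hprim : IsPrimitiveRoot ζ p := Complex.isPrimitiveRoot_exp p (by omega)
  have hζ1 : ζ ^ p = 1 := hprim.pow_eq_one
  set ψ : ZMod p → ℂ := fun c => ζ ^ c.val with hψdef
  have hmod : ∀ m : ℕ, ζ ^ m = ζ ^ (m % p) := by
    intro m
    conv_lhs => rw [← Nat.mod_add_div m p]
    rw [pow_add, pow_mul, hζ1, one_pow, mul_one]
  have hψ0 : ψ 0 = 1 := by simp [hψdef]
  have hψadd : ∀ c d : ZMod p, ψ (c + d) = ψ c * ψ d := by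
    intro c d
    show ζ ^ (c + d).val = ζ ^ c.val * ζ ^ d.val
    rw [ZMod.val_add, ← hmod, pow_add]
  have hψsum : ∀ (T : Finset (ZMod p)) (f : ZMod p → ZMod p),
      ψ (∑ x ∈ T, f x) = ∏ x ∈ T, ψ (f x) := by
    intro T f
    induction T using Finset.cons_induction with
    | empty => simpa using hψ0
    | cons x T hx ihT =>
      rw [Finset.sum_cons, Finset.prod_cons, hψadd, ihT]
  have hep : ∀ a x : ZMod p, ep p a x = ψ (a * x) := by
    intro a x
    show _ = ζ ^ (a * x).val
    rw [ZMod.val_mul, ← hmod, ← Complex.exp_nat_mul]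
    unfold ep
    congr 1
    push_cast
    ring
  have hψnorm : ∀ c : ZMod p, ‖ψ c‖ = 1 := by
    intro c
    show ‖ζ ^ c.val‖ = 1
    rw [norm_pow]
    have hζ : ζ = Complex.exp ((2 * Real.pi / p : ℝ) * Complex.I) := by
      rw [hζdef]
      congr 1
      push_cast
      ring
    rw [hζ, Complex.norm_exp_ofReal_mul_I, one_pow]
  have hψpow : ∀ (c : ZMod p) (m : ℕ), ψ c ^ m = ψ ((m : ZMod p) * c) := by
    intro c m
    induction m with
    | zero => simpa using hψ0.symm
    | succ n ihn =>
      rw [pow_succ, ihn, ← hψadd]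
      congr 1
      push_cast
      ring
  have horth : ∀ c : ZMod p, (∑ a : ZMod p, ψ (a * c)) = if c = 0 then (p : ℂ) else 0 := by
    intro c
    by_cases hc : c = 0
    · simp [hc, hψ0, ZMod.card]
    · rw [if_neg hc]
      have h1 : ∑ a : ZMod p, ψ (a * c) = ∑ a : ZMod p, ψ a :=
        Fintype.sum_equiv (Equiv.mulRight₀ c hc) _ _ (fun a => rfl)
      have h2 : ∑ a : ZMod p, ψ a = ∑ i ∈ Finset.range p, ζ ^ i := by
        apply Finset.sum_nbij' (fun a : ZMod p => a.val) (fun i => (i : ZMod p))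
        · intro a _
          exact Finset.mem_range.2 (ZMod.val_lt a)
        · intro i _
          exact Finset.mem_univ _
        · intro a _
          exact ZMod.natCast_zmod_val a
        · intro i hi
          exact ZMod.val_cast_of_lt (Finset.mem_range.1 hi)
        · intro a _
          rfl
      rw [h1, h2, hprim.geom_sum_eq_zero (by omega)]
  -- the counting quantity
  set N : ℕ := ((H.powersetCard k).filter (fun T => ∑ x ∈ T, x = b)).card with hN
  -- key identity
  have key : ∑ a : ZMod p, (ψ (a * (-b)) * ∑ T ∈ H.powersetCard k, ∏ x ∈ T, ψ (a * x))
      = (N : ℂ) * p := by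
    calc ∑ a : ZMod p, (ψ (a * (-b)) * ∑ T ∈ H.powersetCard k, ∏ x ∈ T, ψ (a * x))
        = ∑ a : ZMod p, ∑ T ∈ H.powersetCard k, ψ (a * (∑ x ∈ T, x - b)) := by
          refine Finset.sum_congr rfl fun a _ => ?_
          rw [Finset.mul_sum]
          refine Finset.sum_congr rfl fun T _ => ?_
          rw [← hψsum T (fun x => a * x), ← hψadd]
          congr 1
          rw [← Finset.mul_sum]
          ring
      _ = ∑ T ∈ H.powersetCard k, ∑ a : ZMod p, ψ (a * (∑ x ∈ T, x - b)) :=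
          Finset.sum_comm
      _ = ∑ T ∈ H.powersetCard k, (if ∑ x ∈ T, x - b = 0 then (p : ℂ) else 0) :=
          Finset.sum_congr rfl fun T _ => horth _
      _ = ∑ T ∈ H.powersetCard k, (if ∑ x ∈ T, x = b then (p : ℂ) else 0) := by
          refine Finset.sum_congr rfl fun T _ => ?_
          exact if_congr sub_eq_zero rfl rfl
      _ = (N : ℂ) * p := by
          rw [← Finset.sum_filter, Finset.sum_const, nsmul_eq_mul, hN]
  -- split off the a = 0 term
  have hzero : ψ ((0 : ZMod p) * (-b)) * ∑ T ∈ H.powersetCard k, ∏ x ∈ T, ψ ((0 : ZMod p) * x)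
      = (s.choose k : ℂ) := by
    simp only [zero_mul, hψ0, one_mul, Finset.prod_const_one, Finset.sum_const, nsmul_eq_mul,
      mul_one, Finset.card_powersetCard, hs]
  have hsplit := Finset.add_sum_erase Finset.univ
    (fun a : ZMod p => ψ (a * (-b)) * ∑ T ∈ H.powersetCard k, ∏ x ∈ T, ψ (a * x))
    (Finset.mem_univ (0 : ZMod p))
  have key2 : (N : ℂ) * p - (s.choose k : ℂ) =
      ∑ a ∈ Finset.univ.erase (0 : ZMod p),
        ψ (a * (-b)) * ∑ T ∈ H.powersetCard k, ∏ x ∈ T, ψ (a * x) := by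
    rw [← key, ← hsplit]
    simp only [hzero]
    ring
  -- bound each nonzero term
  have hterm : ∀ a ∈ Finset.univ.erase (0 : ZMod p),
      ‖ψ (a * (-b)) * ∑ T ∈ H.powersetCard k, ∏ x ∈ T, ψ (a * x)‖ ≤ cB B k := by
    intro a ha
    have ha0 : a ≠ 0 := (Finset.mem_erase.1 ha).1
    rw [norm_mul, hψnorm, one_mul]
    -- identify the inner sum with esymmC over the subtype ↥H
    have hid : ∑ T ∈ H.powersetCard k, ∏ x ∈ T, ψ (a * x)
        = esymmC (fun x : ↥H => ψ (a * ↑x)) k := by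
      rw [esymmC]
      have hmap : (Finset.univ : Finset ↥H).val.map (fun x : ↥H => ψ (a * ↑x))
          = H.val.map (fun x => ψ (a * x)) := by
        rw [Finset.univ_eq_attach]
        exact Multiset.attach_map_val' H.val (fun x => ψ (a * x))
      rw [hmap, Finset.esymm_map_val]
    rw [hid]
    apply esymmC_bound B hB0 _ k
    intro m h1m hmk
    have hpsum : ∑ x : ↥H, (ψ (a * ↑x)) ^ m = ∑ x ∈ H, ep p ((m : ZMod p) * a) x := by
      rw [← Finset.sum_attach H (fun x => ep p ((m : ZMod p) * a) x), Finset.univ_eq_attach]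
      refine Finset.sum_congr rfl fun x _ => ?_
      rw [hψpow, hep]
      congr 1
      ring
    rw [hpsum]
    apply hB
    apply mul_ne_zero _ ha0
    intro hm0
    rw [ZMod.natCast_eq_zero_iff] at hm0
    have := Nat.le_of_dvd (by omega) hm0
    omega
  -- assemble
  have hbig : ‖(N : ℂ) * p - (s.choose k : ℂ)‖ ≤ (p : ℝ) * cB B k := by
    rw [key2]
    calc ‖∑ a ∈ Finset.univ.erase (0 : ZMod p),
          ψ (a * (-b)) * ∑ T ∈ H.powersetCard k, ∏ x ∈ T, ψ (a * x)‖
        ≤ ∑ a ∈ Finset.univ.erase (0 : ZMod p),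
          ‖ψ (a * (-b)) * ∑ T ∈ H.powersetCard k, ∏ x ∈ T, ψ (a * x)‖ := norm_sum_le _ _
      _ ≤ ∑ _a ∈ Finset.univ.erase (0 : ZMod p), cB B k := Finset.sum_le_sum hterm
      _ = ((Finset.univ.erase (0 : ZMod p)).card : ℝ) * cB B k := by
          rw [Finset.sum_const, nsmul_eq_mul]
      _ ≤ (p : ℝ) * cB B k := by
          apply mul_le_mul_of_nonneg_right _ (cB_nonneg hB0 k)
          have : (Finset.univ.erase (0 : ZMod p)).card ≤ Fintype.card (ZMod p) :=
            (Finset.card_erase_le).trans (le_of_eq Finset.card_univ)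
          rw [ZMod.card] at this
          exact_mod_cast this
  -- translate to real absolute value
  have hreal : ‖(N : ℂ) * p - (s.choose k : ℂ)‖ = |(N : ℝ) * p - (s.choose k : ℝ)| := by
    have : (N : ℂ) * p - (s.choose k : ℂ) = (((N : ℝ) * p - (s.choose k : ℝ) : ℝ) : ℂ) := by
      push_cast
      ring
    rw [this, Complex.norm_real, Real.norm_eq_abs]
  rw [hreal] at hbig
  have hppos : (0 : ℝ) < p := by exact_mod_cast (by omega : 0 < p)
  have hrw : (N : ℝ) - (p : ℝ)⁻¹ * (s.choose k : ℝ)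
      = (p : ℝ)⁻¹ * ((N : ℝ) * p - (s.choose k : ℝ)) := by
    field_simp
  rw [hrw, abs_mul, abs_of_pos (inv_pos.2 hppos)]
  calc (p : ℝ)⁻¹ * |(N : ℝ) * p - (s.choose k : ℝ)| ≤ (p : ℝ)⁻¹ * ((p : ℝ) * cB B k) :=
        mul_le_mul_of_nonneg_left hbig (le_of_lt (inv_pos.2 hppos))
    _ = cB B k := by field_simp
end
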